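/- arXiv:2212.00995 — 8 statements merged into one kernel-verified Lean document; each statement's English description precedes it below -/
import Mathlib

section
/- Let F be an algebraically closed field of characteristic zero and let P₁, ..., Pₙ be traceless square matrices over F. Let Q = P₁ ⊕ ... ⊕ Pₙ be their Kronecker sum (so the eigenvalues of Q are all sums λ₁ + ⋯ + λₙ with λᵢ an eigenvalue of Pᵢ). Then every eigenvalue of Q is rational if and only if every eigenvalue of each Pᵢ is rational. -/
open Matrix Polynomial

/-- The Kronecker sum of a family of square matrices `P i : M_{k i}(F)`, realized as a matrix
acting on the tensor product space, whose index set is the pi type `∀ i, Fin (k i)`. -/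
noncomputable def kroneckerSumFamily {F : Type*} [Field F] {N : ℕ} {k : Fin N → ℕ}
    (P : ∀ i, Matrix (Fin (k i)) (Fin (k i)) F) :
    Matrix (∀ i, Fin (k i)) (∀ i, Fin (k i)) F :=
  ∑ i : Fin N, Matrix.of fun v w =>
    P i (v i) (w i) * ∏ j ∈ Finset.univ.erase i, (if v j = w j then (1 : F) else 0)

section Helpers
variable {F : Type*} [Field F] {m : Type*} [Fintype m] [DecidableEq m]

variable {F : Type*} [Field F] {m : Type*} [Fintype m] [DecidableEq m]

lemma eval_charpoly' (M : Matrix m m F) (x : F) :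
    M.charpoly.eval x = (Matrix.diagonal (fun _ => x) - M).det := by
  rw [Matrix.charpoly, ← Polynomial.coe_evalRingHom, RingHom.map_det]
  congr 1
  ext i j
  simp [charmatrix_apply, Matrix.diagonal_apply, apply_ite (Polynomial.eval x)]

lemma mem_spectrum_iff_root (M : Matrix m m F) (x : F) :
    x ∈ spectrum F M ↔ M.charpoly.IsRoot x := by
  rw [spectrum.mem_iff, Matrix.isUnit_iff_isUnit_det, isUnit_iff_ne_zero, not_not,
    IsRoot, eval_charpoly']
  constructor
  · intro h; rw [← h]; congr 1; try simp [Matrix.algebraMap_eq_diagonal]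
  · intro h; rw [← h]; congr 1; try simp [Matrix.algebraMap_eq_diagonal]

end Helpers

section KL
variable {F : Type*} [Field F] {N : ℕ} {k : Fin N → ℕ}

noncomputable def kl (i : Fin N) (M : Matrix (Fin (k i)) (Fin (k i)) F) :
    Matrix (∀ j, Fin (k j)) (∀ j, Fin (k j)) F :=
  Matrix.of fun v w => M (v i) (w i) * ∏ j ∈ Finset.univ.erase i, (if v j = w j then (1 : F) else 0)

lemma kl_apply (i : Fin N) (M : Matrix (Fin (k i)) (Fin (k i)) F) (v w) :
    kl i M v w = M (v i) (w i) * ∏ j ∈ Finset.univ.erase i, (if v j = w j then (1 : F) else 0) :=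
  rfl

lemma delta_prod (i : Fin N) (v w : ∀ j, Fin (k j)) :
    (if v i = w i then (1:F) else 0) *
      ∏ j ∈ Finset.univ.erase i, (if v j = w j then (1 : F) else 0) =
    if v = w then 1 else 0 := by
  classical
  rw [Finset.mul_prod_erase Finset.univ (fun j => if v j = w j then (1:F) else 0)
    (Finset.mem_univ i), Finset.prod_boole]
  congr 1
  simp [funext_iff]

lemma sum_update_of_support {f : (∀ j, Fin (k j)) → F} {i : Fin N} (u : ∀ j, Fin (k j))
    (h0 : ∀ w, f w ≠ 0 → ∀ j, j ≠ i → w j = u j) :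
    ∑ w, f w = ∑ t, f (Function.update u i t) := by
  classical
  have him : ∑ w ∈ Finset.univ.image (fun t : Fin (k i) => Function.update u i t), f w
      = ∑ t, f (Function.update u i t) :=
    Finset.sum_image (fun t _ t' _ h => Function.update_injective u i h)
  rw [← him]
  refine (Finset.sum_subset (Finset.subset_univ _) ?_).symm
  intro w _ hw
  by_contra hfw
  apply hw
  simp only [Finset.mem_image, Finset.mem_univ, true_and]
  refine ⟨w i, ?_⟩
  funext j
  rcases eq_or_ne j i with rfl | hj
  · simp
  · rw [Function.update_of_ne hj, h0 w hfw j hj]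

lemma kl_one (i : Fin N) : kl i (1 : Matrix (Fin (k i)) (Fin (k i)) F) = 1 := by
  classical
  funext v w
  rw [kl_apply, Matrix.one_apply, delta_prod, Matrix.one_apply]

lemma kl_mul (i : Fin N) (M M' : Matrix (Fin (k i)) (Fin (k i)) F) :
    kl i M * kl i M' = kl i (M * M') := by
  classical
  funext v w
  rw [Matrix.mul_apply]
  have hsupp : ∀ u, kl i M v u * kl i M' u w ≠ 0 → ∀ j, j ≠ i → u j = v j := by
    intro u hu j hj
    by_contra hne
    apply hu
    have hz : ∏ j ∈ Finset.univ.erase i, (if v j = u j then (1:F) else 0) = 0 :=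
      Finset.prod_eq_zero (Finset.mem_erase.2 ⟨hj, Finset.mem_univ j⟩)
        (if_neg (fun hh : v j = u j => hne hh.symm))
    rw [kl_apply i M v u, hz]
    ring
  rw [sum_update_of_support (i := i) v hsupp]
  rw [kl_apply, Matrix.mul_apply, Finset.sum_mul]
  apply Finset.sum_congr rfl
  intro t _
  rw [kl_apply, kl_apply]
  simp only [Function.update_self]
  have h1 : ∀ j ∈ Finset.univ.erase i,
      (if v j = Function.update v i t j then (1:F) else 0) = 1 := by
    intro j hj
    rw [Function.update_of_ne (Finset.mem_erase.1 hj).1, if_pos rfl]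
  have h2 : ∀ j ∈ Finset.univ.erase i,
      (if Function.update v i t j = w j then (1:F) else 0)
        = (if v j = w j then (1:F) else 0) := by
    intro j hj
    rw [Function.update_of_ne (Finset.mem_erase.1 hj).1]
  rw [Finset.prod_congr rfl h1, Finset.prod_congr rfl h2, Finset.prod_const_one]
  ring

lemma kl_mul_kl {i i' : Fin N} (h : i ≠ i') (M : Matrix (Fin (k i)) (Fin (k i)) F)
    (M' : Matrix (Fin (k i')) (Fin (k i')) F) (v w : ∀ j, Fin (k j)) :
    (kl i M * kl i' M') v w
      = M (v i) (w i) * M' (v i') (w i') *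
        ∏ j ∈ (Finset.univ.erase i).erase i', (if v j = w j then (1:F) else 0) := by
  classical
  rw [Matrix.mul_apply]
  have hsupp : ∀ u, kl i M v u * kl i' M' u w ≠ 0 → ∀ j, j ≠ i' → u j = w j := by
    intro u hu j hj
    by_contra hne
    apply hu
    have hz : ∏ j ∈ Finset.univ.erase i', (if u j = w j then (1:F) else 0) = 0 :=
      Finset.prod_eq_zero (Finset.mem_erase.2 ⟨hj, Finset.mem_univ j⟩) (if_neg hne)
    rw [kl_apply i' M' u w, hz]
    ring
  rw [sum_update_of_support (i := i') w hsupp]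
  rw [Finset.sum_eq_single (v i')]
  · simp only [kl_apply, Function.update_self]
    rw [Function.update_of_ne h]
    have h1 : ∀ j ∈ Finset.univ.erase i',
        (if Function.update w i' (v i') j = w j then (1:F) else 0) = 1 := by
      intro j hj
      rw [Function.update_of_ne (Finset.mem_erase.1 hj).1, if_pos rfl]
    rw [Finset.prod_congr rfl h1, Finset.prod_const_one, mul_one]
    have h3 : ∏ j ∈ Finset.univ.erase i,
        (if v j = Function.update w i' (v i') j then (1:F) else 0)
        = ∏ j ∈ (Finset.univ.erase i).erase i', (if v j = w j then (1:F) else 0) := by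
      rw [← Finset.mul_prod_erase _ _ (Finset.mem_erase.2 ⟨h.symm, Finset.mem_univ i'⟩)]
      rw [Function.update_self, if_pos rfl, one_mul]
      apply Finset.prod_congr rfl
      intro j hj
      rw [Function.update_of_ne (Finset.mem_erase.1 hj).1]
    rw [h3]
    ring
  · intro t _ ht
    have hz : ∏ j ∈ Finset.univ.erase i,
        (if v j = Function.update w i' t j then (1:F) else 0) = 0 := by
      apply Finset.prod_eq_zero (Finset.mem_erase.2 ⟨h.symm, Finset.mem_univ i'⟩)
      rw [Function.update_self, if_neg (fun hvt => ht hvt.symm)]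
    rw [kl_apply i M, hz]
    ring
  · intro habs; exact absurd (Finset.mem_univ _) habs

lemma kl_commute {i i' : Fin N} (h : i ≠ i') (M : Matrix (Fin (k i)) (Fin (k i)) F)
    (M' : Matrix (Fin (k i')) (Fin (k i')) F) :
    kl i M * kl i' M' = kl i' M' * kl i M := by
  funext v w
  rw [kl_mul_kl h, kl_mul_kl h.symm, Finset.erase_right_comm]
  ring
end KL

section KL2
variable {F : Type*} [Field F] {N : ℕ} {k : Fin N → ℕ}

lemma kl_smul (i : Fin N) (x : F) (M : Matrix (Fin (k i)) (Fin (k i)) F) :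
    kl i (x • M) = x • kl i M := by
  funext v w
  simp only [kl_apply, Matrix.smul_apply, smul_eq_mul, mul_assoc]

lemma kl_sub (i : Fin N) (M M' : Matrix (Fin (k i)) (Fin (k i)) F) :
    kl i (M - M') = kl i M - kl i M' := by
  funext v w
  simp only [kl_apply, Matrix.sub_apply, sub_mul]

lemma kl_algebraMap (i : Fin N) (x : F) :
    kl i (algebraMap F (Matrix (Fin (k i)) (Fin (k i)) F) x)
      = algebraMap F (Matrix (∀ j, Fin (k j)) (∀ j, Fin (k j)) F) x := by
  rw [Algebra.algebraMap_eq_smul_one, Algebra.algebraMap_eq_smul_one, kl_smul, kl_one]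

lemma kl_mulVec_prod (i : Fin N) (M : Matrix (Fin (k i)) (Fin (k i)) F)
    (x : ∀ j, Fin (k j) → F) :
    kl i M *ᵥ (fun u => ∏ j, x j (u j))
      = fun u => (M *ᵥ x i) (u i) * ∏ j ∈ Finset.univ.erase i, x j (u j) := by
  classical
  funext u
  rw [Matrix.mulVec, dotProduct]
  have hsupp : ∀ w, kl i M u w * ∏ j, x j (w j) ≠ 0 → ∀ j, j ≠ i → w j = u j := by
    intro w hw j hj
    by_contra hne
    apply hw
    have hz : ∏ j ∈ Finset.univ.erase i, (if u j = w j then (1:F) else 0) = 0 :=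
      Finset.prod_eq_zero (Finset.mem_erase.2 ⟨hj, Finset.mem_univ j⟩)
        (if_neg (fun hh : u j = w j => hne hh.symm))
    rw [kl_apply i M u w, hz]
    ring
  rw [sum_update_of_support (i := i) u hsupp, Matrix.mulVec, dotProduct,
    Finset.sum_mul]
  apply Finset.sum_congr rfl
  intro t _
  rw [kl_apply]
  simp only [Function.update_self]
  have h1 : ∀ j ∈ Finset.univ.erase i,
      (if u j = Function.update u i t j then (1:F) else 0) = 1 := by
    intro j hj
    rw [Function.update_of_ne (Finset.mem_erase.1 hj).1, if_pos rfl]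
  rw [Finset.prod_congr rfl h1, Finset.prod_const_one, mul_one]
  have h2 : ∏ j, x j (Function.update u i t j)
      = x i t * ∏ j ∈ Finset.univ.erase i, x j (u j) := by
    rw [← Finset.mul_prod_erase _ _ (Finset.mem_univ i), Function.update_self]
    congr 1
    apply Finset.prod_congr rfl
    intro j hj
    rw [Function.update_of_ne (Finset.mem_erase.1 hj).1]
  rw [h2]
  ring

/-- sums of eigenvalues are eigenvalues of the Kronecker sum -/
lemma sum_mem_spectrum (P : ∀ i, Matrix (Fin (k i)) (Fin (k i)) F)
    (c : Fin N → F) (hc : ∀ i, c i ∈ spectrum F (P i)) :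
    (∑ i, c i) ∈ spectrum F (∑ i, kl i (P i)) := by
  classical
  have hv : ∀ i, ∃ v : Fin (k i) → F, v ≠ 0 ∧ P i *ᵥ v = c i • v := by
    intro i
    have h1 := spectrum.mem_iff.1 (hc i)
    rw [Matrix.isUnit_iff_isUnit_det, isUnit_iff_ne_zero, not_not,
      ← Matrix.exists_mulVec_eq_zero_iff] at h1
    obtain ⟨v, hv0, hveq⟩ := h1
    refine ⟨v, hv0, ?_⟩
    rw [Matrix.sub_mulVec] at hveq
    have := sub_eq_zero.1 hveq
    rw [← this, Algebra.algebraMap_eq_smul_one, Matrix.smul_mulVec, Matrix.one_mulVec]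
  choose v hv0 hveq using hv
  set X : (∀ j, Fin (k j)) → F := fun u => ∏ j, v j (u j) with hXdef
  have hX : X ≠ 0 := by
    have ha : ∀ j, ∃ a, v j a ≠ 0 := fun j => Function.ne_iff.1 (hv0 j)
    choose a ha using ha
    intro h0
    have : X a = 0 := by rw [h0]; rfl
    exact (Finset.prod_ne_zero_iff.2 fun j _ => ha j) this
  rw [spectrum.mem_iff, Matrix.isUnit_iff_isUnit_det, isUnit_iff_ne_zero, not_not,
    ← Matrix.exists_mulVec_eq_zero_iff]
  refine ⟨X, hX, ?_⟩
  rw [Matrix.sub_mulVec, Algebra.algebraMap_eq_smul_one, Matrix.smul_mulVec,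
    Matrix.one_mulVec, sub_eq_zero]
  have hQX : (∑ i, kl i (P i)) *ᵥ X = ∑ i, (kl i (P i) *ᵥ X) :=
    map_sum (AddMonoidHom.mk' (fun M : Matrix (∀ j, Fin (k j)) (∀ j, Fin (k j)) F => M *ᵥ X)
      (fun A B => Matrix.add_mulVec A B X)) (fun i => kl i (P i)) Finset.univ
  rw [hQX]
  rw [Finset.sum_smul]
  apply Finset.sum_congr rfl
  intro i _
  rw [hXdef, kl_mulVec_prod i (P i) v, hveq i]
  funext u
  simp only [Pi.smul_apply, smul_eq_mul]
  rw [← Finset.mul_prod_erase _ (fun j => v j (u j)) (Finset.mem_univ i)]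
  ring

/-- a unit of the ambient finite-dimensional algebra lying in a subalgebra
is a unit of the subalgebra -/
lemma isUnit_of_isUnit_val {K A : Type*} [Field K] [Ring A] [Algebra K A]
    [FiniteDimensional K A] (S : Subalgebra K A) (x : S) (h : IsUnit (x : A)) :
    IsUnit x := by
  have hinj : Function.Injective (LinearMap.mulLeft K x) := by
    intro y z hyz
    have : (x : A) * y = (x : A) * z := congrArg Subtype.val hyz
    exact Subtype.ext (h.mul_left_cancel this)
  have hsurj := LinearMap.surjective_of_injective hinj
  obtain ⟨y, hy⟩ := hsurj 1
  have hinj' : Function.Injective (LinearMap.mulRight K x) := by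
    intro y z hyz
    have : (y : A) * x = (z : A) * x := congrArg Subtype.val hyz
    exact Subtype.ext (h.mul_right_cancel this)
  obtain ⟨z, hz⟩ := LinearMap.surjective_of_injective hinj' 1
  rw [LinearMap.mulLeft_apply] at hy
  rw [LinearMap.mulRight_apply] at hz
  have hzy : z = y := by
    calc z = z * (x * y) := by rw [hy, mul_one]
    _ = (z * x) * y := by rw [mul_assoc]
    _ = y := by rw [hz, one_mul]
  exact ⟨⟨x, y, hy, hzy ▸ hz⟩, rfl⟩
end KL2

section Hard
set_option maxHeartbeats 1000000 in
set_option synthInstance.maxHeartbeats 400000 in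
lemma spectrum_kl_sum_subset {F : Type*} [Field F] [IsAlgClosed F] {N : ℕ} {k : Fin N → ℕ}
    (P : ∀ i, Matrix (Fin (k i)) (Fin (k i)) F)
    {μ : F} (hμ : μ ∈ spectrum F (∑ i, kl i (P i))) :
    ∃ c : Fin N → F, (∀ i, c i ∈ spectrum F (P i)) ∧ μ = ∑ i, c i := by
  classical
  set A : Fin N → Matrix (∀ j, Fin (k j)) (∀ j, Fin (k j)) F := fun i => kl i (P i) with hAdef
  set s : Set (Matrix (∀ j, Fin (k j)) (∀ j, Fin (k j)) F) := Set.range A with hsdef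
  have hcomm : ∀ a ∈ s, ∀ b ∈ s, a * b = b * a := by
    rintro a ⟨i, rfl⟩ b ⟨i', rfl⟩
    rcases eq_or_ne i i' with rfl | h
    · rfl
    · exact kl_commute h (P i) (P i')
  set S := Algebra.adjoin F s with hSdef
  have hA : ∀ i, A i ∈ S := fun i => Algebra.subset_adjoin ⟨i, rfl⟩
  set A' : Fin N → S := fun i => ⟨A i, hA i⟩ with hA'def
  set Q' : S := ∑ i, A' i with hQ'def
  have hQ : (Q' : Matrix (∀ j, Fin (k j)) (∀ j, Fin (k j)) F) = ∑ i, A i := by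
    rw [hQ'def]
    exact AddSubmonoidClass.coe_finset_sum A' Finset.univ
  set x : S := algebraMap F S μ - Q' with hxdef
  have hxval : (x : Matrix (∀ j, Fin (k j)) (∀ j, Fin (k j)) F)
      = algebraMap F _ μ - ∑ i, A i := by
    rw [hxdef]
    push_cast
    rw [hQ]
  have hx : ¬ IsUnit x := by
    intro h
    have h2 : IsUnit ((x : Matrix (∀ j, Fin (k j)) (∀ j, Fin (k j)) F)) := h.map S.val
    rw [hxval] at h2
    exact spectrum.mem_iff.1 hμ h2
  letI : CommRing S := Algebra.adjoinCommRingOfComm F hcomm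
  obtain ⟨m, hm, hxm⟩ := exists_max_ideal_of_mem_nonunits (show x ∈ nonunits S from hx)
  haveI := hm
  letI : Field (S ⧸ m) := Ideal.Quotient.field m
  haveI : Module.Finite F S := inferInstance
  haveI : Module.Finite F (S ⧸ m) :=
    Module.Finite.of_surjective (Ideal.Quotient.mkₐ F m).toLinearMap
      (Ideal.Quotient.mkₐ_surjective F m)
  haveI : Algebra.IsIntegral F (S ⧸ m) := Algebra.IsIntegral.of_finite F _
  have hsurj : Function.Surjective (algebraMap F (S ⧸ m)) :=
    IsAlgClosed.algebraMap_bijective_of_isIntegral.2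
  have hinj : Function.Injective (algebraMap F (S ⧸ m)) :=
    (algebraMap F (S ⧸ m)).injective
  let e : F ≃ₐ[F] (S ⧸ m) := AlgEquiv.ofBijective (Algebra.ofId F (S ⧸ m)) ⟨hinj, hsurj⟩
  let χ : S →ₐ[F] F := e.symm.toAlgHom.comp (Ideal.Quotient.mkₐ F m)
  have hχmk : ∀ y : S, χ y = e.symm (Ideal.Quotient.mk m y) := fun y => rfl
  have hker : ∀ y : S, χ y = 0 → y ∈ m := by
    intro y hy
    rw [hχmk] at hy
    have h1 : Ideal.Quotient.mk m y = 0 := by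
      have := congrArg e hy
      rw [map_zero, AlgEquiv.apply_symm_apply] at this
      exact this
    exact (Ideal.Quotient.eq_zero_iff_mem).1 h1
  have hχx : χ x = 0 := by
    rw [hχmk, (Ideal.Quotient.eq_zero_iff_mem).2 hxm, map_zero]
  refine ⟨fun i => χ (A' i), ?_, ?_⟩
  · intro i
    rw [spectrum.mem_iff]
    intro hunit
    set xi : S := algebraMap F S (χ (A' i)) - A' i with hxidef
    have hχxi : χ xi = 0 := by
      rw [hxidef, map_sub, AlgHom.commutes]
      simp
    have hxim : xi ∈ m := hker xi hχxi
    have hxiu : IsUnit xi := by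
      apply isUnit_of_isUnit_val
      have hval : (xi : Matrix (∀ j, Fin (k j)) (∀ j, Fin (k j)) F)
          = kl i (algebraMap F (Matrix (Fin (k i)) (Fin (k i)) F) (χ (A' i)) - P i) := by
        rw [hxidef]
        push_cast
        rw [kl_sub, kl_algebraMap]
      rw [hval]
      obtain ⟨u, hu⟩ := hunit
      refine ⟨⟨kl i (u : Matrix (Fin (k i)) (Fin (k i)) F),
        kl i ((↑u⁻¹ : Matrix (Fin (k i)) (Fin (k i)) F)), ?_, ?_⟩, ?_⟩
      · rw [kl_mul]
        rw [show ((u : Matrix (Fin (k i)) (Fin (k i)) F) * ↑u⁻¹) = 1 from u.mul_inv]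
        exact kl_one i
      · rw [kl_mul]
        rw [show ((↑u⁻¹ : Matrix (Fin (k i)) (Fin (k i)) F) * u) = 1 from u.inv_mul]
        exact kl_one i
      · show kl i (u : Matrix (Fin (k i)) (Fin (k i)) F) = _
        rw [hu]
    exact hm.ne_top (m.eq_top_of_isUnit_mem hxim hxiu)
  · have h2 : χ x = μ - ∑ i, χ (A' i) := by
      rw [hxdef, map_sub, AlgHom.commutes, hQ'def, map_sum]
      simp
    rw [hχx] at h2
    exact sub_eq_zero.1 h2.symm
end Hard

lemma multiset_sum_rat {F : Type*} [Field F] [CharZero F] (s : Multiset F)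
    (h : ∀ x ∈ s, ∃ q : ℚ, x = (q : F)) : ∃ q : ℚ, s.sum = (q : F) := by
  induction s using Multiset.induction with
  | empty => exact ⟨0, by simp⟩
  | cons a t ih =>
    obtain ⟨qa, hqa⟩ := h a (Multiset.mem_cons_self a t)
    obtain ⟨qt, hqt⟩ := ih (fun x hx => h x (Multiset.mem_cons_of_mem hx))
    exact ⟨qa + qt, by rw [Multiset.sum_cons, hqa, hqt]; push_cast; ring⟩

theorem stmt5 {F : Type*} [Field F] [IsAlgClosed F] [CharZero F]
    {N : ℕ} {k : Fin N → ℕ} (hk : ∀ i, 0 < k i)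
    (P : ∀ i, Matrix (Fin (k i)) (Fin (k i)) F)
    (htr : ∀ i, (P i).trace = 0) :
    (∀ μ ∈ spectrum F (kroneckerSumFamily P), ∃ q : ℚ, μ = (q : F)) ↔
      (∀ i, ∀ μ ∈ spectrum F (P i), ∃ q : ℚ, μ = (q : F)) := by
  classical
  have hQdef : kroneckerSumFamily P = ∑ i, kl i (P i) := rfl
  constructor
  · intro HQ i μ hμ
    -- pick an eigenvalue of each P j
    have hc : ∀ j, ∃ c : F, c ∈ spectrum F (P j) := by
      intro j
      have hdeg : ((P j).charpoly).degree ≠ 0 := by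
        rw [Polynomial.degree_eq_natDegree (P j).charpoly_monic.ne_zero,
          Matrix.charpoly_natDegree_eq_dim]
        simp only [Fintype.card_fin]
        exact_mod_cast (hk j).ne'
      obtain ⟨c, hc⟩ := IsAlgClosed.exists_root _ hdeg
      exact ⟨c, (mem_spectrum_iff_root _ _).2 hc⟩
    choose c hc using hc
    -- every eigenvalue of P i, shifted by the fixed eigenvalues, is rational
    have key : ∀ ν ∈ spectrum F (P i), ∃ q : ℚ,
        ν + ∑ j ∈ Finset.univ.erase i, c j = (q : F) := by
      intro ν hν
      have hsum := sum_mem_spectrum P (Function.update c i ν)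
        (fun j => by
          rcases eq_or_ne j i with rfl | hj
          · rw [Function.update_self]; exact hν
          · rw [Function.update_of_ne hj]; exact hc j)
      rw [Finset.sum_update_of_mem (Finset.mem_univ i), ← Finset.erase_eq] at hsum
      exact HQ _ (hQdef ▸ hsum)
    -- all roots of charpoly of P i are in its spectrum
    set R := ((P i).charpoly).roots with hRdef
    have hRmem : ∀ t ∈ R, t ∈ spectrum F (P i) := by
      intro t ht
      exact (mem_spectrum_iff_root _ _).2 (Polynomial.isRoot_of_mem_roots ht)
    have hRsum : R.sum = 0 := by
      rw [hRdef, ← Matrix.trace_eq_sum_roots_charpoly, htr i]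
    have hRcard : R.card = k i := by
      rw [hRdef, Polynomial.splits_iff_card_roots.1 (IsAlgClosed.splits _),
        Matrix.charpoly_natDegree_eq_dim, Fintype.card_fin]
    -- μ - t rational for each root t
    have hdiff : ∀ x ∈ R.map (fun t => μ - t), ∃ q : ℚ, x = (q : F) := by
      intro x hx
      obtain ⟨t, ht, rfl⟩ := Multiset.mem_map.1 hx
      obtain ⟨q1, hq1⟩ := key μ hμ
      obtain ⟨q2, hq2⟩ := key t (hRmem t ht)
      refine ⟨q1 - q2, ?_⟩
      have : μ - t = (μ + ∑ j ∈ Finset.univ.erase i, c j)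
          - (t + ∑ j ∈ Finset.univ.erase i, c j) := by ring
      rw [this, hq1, hq2]
      push_cast
      ring
    obtain ⟨q, hq⟩ := multiset_sum_rat _ hdiff
    have hsum : (R.map (fun t => μ - t)).sum = (k i : F) * μ := by
      rw [Multiset.sum_map_sub]
      rw [Multiset.map_id', Multiset.map_const', Multiset.sum_replicate, hRsum, hRcard,
        sub_zero, nsmul_eq_mul]
    rw [hsum] at hq
    refine ⟨q / (k i : ℚ), ?_⟩
    have hkiF : ((k i : ℕ) : F) ≠ 0 := Nat.cast_ne_zero.2 (hk i).ne'
    have h5 : μ = (q : F) / ((k i : ℕ) : F) := by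
      field_simp
      linear_combination hq
    rw [h5]
    push_cast
    ring
  · intro HP μ hμ
    rw [hQdef] at hμ
    obtain ⟨cc, hcc, rfl⟩ := spectrum_kl_sum_subset P hμ
    choose q hq using fun i => HP i (cc i) (hcc i)
    refine ⟨∑ i, q i, ?_⟩
    push_cast
    exact Finset.sum_congr rfl (fun i _ => hq i)
end

section
/- Let (K, δ) be a differential field of characteristic zero, let A = ℚ-span of logarithmic derivatives of K, let S ⊆ K \ {0} be finite, and let A_S' be a ℤ-complement of A ∩ ⟨S⟩ in the group ⟨S⟩ generated by S. If A_S' = 0 (equivalently S ⊆ A), then there exists a differential field extension (E, δ_E) of (K, δ) with E/K a finite field extension such that for every a ∈ S the equation δ_E(y) = a·y has a nonzero solution in E. -/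
open scoped Differential

/-!
If `δ c = n a c` with `c ≠ 0`, then any `n`-th root `w` of `c` satisfies `n w^(n-1) δ w = n a w^n`,
hence `δ w = a w`. Adjoining such roots for all `a ∈ S` gives a finite extension, and the
derivation of `K` extends (uniquely) to any finite extension in characteristic zero.
-/

abbrev Differential.ofLeibniz {R : Type*} [CommRing R] (δ : R → R)
    (hadd : ∀ a b : R, δ (a + b) = δ a + δ b)
    (hmul : ∀ a b : R, δ (a * b) = δ a * b + a * δ b) : Differential R where
  deriv := Derivation.mk' (AddMonoidHom.mk' δ hadd).toIntLinearMap fun a b => by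
    simp only [AddMonoidHom.coe_toIntLinearMap, AddMonoidHom.mk'_apply, smul_eq_mul, hmul]
    ring

theorem Differential.deriv_eq_mul_of_deriv_pow {R : Type*} [CommRing R] [IsDomain R] [CharZero R]
    [Differential R] {n : ℕ} (hn : n ≠ 0) {z : R} (hz : z ≠ 0) {a : R}
    (h : (z ^ n)′ = n * a * z ^ n) : z′ = a * z := by
  rw [Derivation.leibniz_pow, nsmul_eq_mul, smul_eq_mul,
    show z ^ n = z ^ (n - 1) * z by rw [← pow_succ, Nat.sub_add_cancel (Nat.pos_of_ne_zero hn)]] at h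
  refine mul_left_cancel₀ (mul_ne_zero (Nat.cast_ne_zero.mpr hn) (pow_ne_zero (n - 1) hz)) ?_
  linear_combination h

theorem stmt7_general {K : Type*} [Field K] [CharZero K] (δ : K → K)
    (hadd : ∀ a b : K, δ (a + b) = δ a + δ b)
    (hmul : ∀ a b : K, δ (a * b) = δ a * b + a * δ b)
    (S : Set K) (hSfin : S.Finite)
    (hSA : ∀ a ∈ S, ∃ n : ℕ, 0 < n ∧ ∃ y : K, y ≠ 0 ∧ δ y = (n : K) * a * y) :
    ∃ (E : IntermediateField K (AlgebraicClosure K)) (δE : E → E),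
      (∀ x y : E, δE (x + y) = δE x + δE y) ∧
      (∀ x y : E, δE (x * y) = δE x * y + x * δE y) ∧
      (∀ a : K, δE (algebraMap K E a) = algebraMap K E (δ a)) ∧
      FiniteDimensional K E ∧
      ∀ a ∈ S, ∃ y : E, y ≠ 0 ∧ δE y = algebraMap K E a * y := by
  let _ : Differential K := .ofLeibniz δ hadd hmul
  choose! n hn c hc0 hc using hSA
  choose! z hz using fun a (ha : a ∈ S) =>
    IsAlgClosed.exists_pow_nat_eq (algebraMap K (AlgebraicClosure K) (c a)) (hn a ha)
  let E := IntermediateField.adjoin K (z '' S)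
  have : Finite (z '' S) := (hSfin.image z).to_subtype
  have : FiniteDimensional K E :=
    IntermediateField.finiteDimensional_adjoin fun x _ => Algebra.IsIntegral.isIntegral x
  -- `Differential E` is Mathlib's extension of `δ` to finite-dimensional intermediate fields.
  refine ⟨E, Differential.deriv, map_add _, fun x y => ?_, deriv_algebraMap, inferInstance,
    fun a ha => ?_⟩
  · rw [Derivation.leibniz, smul_eq_mul, smul_eq_mul, add_comm, mul_comm]
  let w : E := ⟨z a, IntermediateField.subset_adjoin K _ ⟨a, ha, rfl⟩⟩
  have hw : w ^ n a = algebraMap K E (c a) := Subtype.ext (hz a ha)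
  have hw0 : w ≠ 0 := by
    rintro h
    rw [h, zero_pow (hn a ha).ne', eq_comm, map_eq_zero] at hw
    exact hc0 a ha hw
  refine ⟨w, hw0, Differential.deriv_eq_mul_of_deriv_pow (hn a ha).ne' hw0 ?_⟩
  rw [hw, deriv_algebraMap]
  change algebraMap K E (δ (c a)) = _
  rw [hc a ha, map_mul, map_mul, map_natCast]

/-- Let `(K, δ)` be a differential field of characteristic zero and
`S ⊆ K \ {0}` a finite set every element of which lies in
`A = {a | δ(y) = n a y has a nonzero solution in K for some n ≥ 1}` (i.e. `A_S' = 0`).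
Then there is a finite differential field extension `(E, δ_E)` of `(K, δ)` containing, for each
`a ∈ S`, a nonzero solution of `δ_E(y) = a y`. -/
theorem stmt7 {K : Type*} [Field K] [CharZero K] (δ : K → K)
    (hadd : ∀ a b : K, δ (a + b) = δ a + δ b)
    (hmul : ∀ a b : K, δ (a * b) = δ a * b + a * δ b)
    (S : Set K) (hSfin : S.Finite) (h0 : (0 : K) ∉ S)
    (hSA : ∀ a ∈ S, ∃ n : ℕ, 0 < n ∧ ∃ y : K, y ≠ 0 ∧ δ y = (n : K) * a * y) :
    ∃ (E : IntermediateField K (AlgebraicClosure K)) (δE : E → E),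
      (∀ x y : E, δE (x + y) = δE x + δE y) ∧
      (∀ x y : E, δE (x * y) = δE x * y + x * δE y) ∧
      (∀ a : K, δE (algebraMap K E a) = algebraMap K E (δ a)) ∧
      FiniteDimensional K E ∧
      ∀ a ∈ S, ∃ y : E, y ≠ 0 ∧ δE y = algebraMap K E a * y :=
  stmt7_general δ hadd hmul S hSfin hSA
end

section
/- Let (K, δ) be a differential field of characteristic zero, (E, δ_E) a differential extension, and a ∈ K. Suppose u ∈ E is nonzero, algebraic over K, and satisfies δ_E(u) = a·u. Then a lies in the ℚ-span of the logarithmic derivatives of K; indeed if f = xⁿ + a_{n−1}x^{n−1} + ⋯ + a₀ is the minimal polynomial of u over K (with a₀ ≠ 0), then a = (1/n)·δ(a₀)·a₀⁻¹. -/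
open Polynomial Finset

/-- If `u ∈ E` is nonzero, algebraic over `K`, and satisfies `δ_E(u) = a·u` with
`a ∈ K`, then `a` lies in the `ℚ`-span of the logarithmic derivatives of `K`; indeed
`a = (1/n)·δ(a₀)·a₀⁻¹` where `a₀` is the constant coefficient and `n` the degree of the minimal
polynomial of `u` over `K`. -/
theorem stmt8 {K E : Type*} [Field K] [CharZero K] [Field E] [Algebra K E]
    (δ : K → K)
    (hadd : ∀ a b : K, δ (a + b) = δ a + δ b)
    (hmul : ∀ a b : K, δ (a * b) = δ a * b + a * δ b)
    (δE : E → E)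
    (hEadd : ∀ x y : E, δE (x + y) = δE x + δE y)
    (hEmul : ∀ x y : E, δE (x * y) = δE x * y + x * δE y)
    (hcomp : ∀ a : K, δE (algebraMap K E a) = algebraMap K E (δ a))
    (a : K) (u : E) (hu : u ≠ 0) (halg : IsIntegral K u)
    (hueq : δE u = algebraMap K E a * u) :
    a ∈ Submodule.span ℚ {x : K | ∃ b : K, b ≠ 0 ∧ x = δ b / b} ∧
      a = ((minpoly K u).natDegree : K)⁻¹ * δ ((minpoly K u).coeff 0)
            * ((minpoly K u).coeff 0)⁻¹ := by
  classical
  set f := minpoly K u with hf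
  set n := f.natDegree with hn
  have hδ1 : δ 1 = 0 := by simpa using hmul 1 1
  have hE1 : δE 1 = 0 := by simpa using hEmul 1 1
  let DE : E →+ E := AddMonoidHom.mk' δE hEadd
  have hDE : ∀ x : E, DE x = δE x := fun _ => rfl
  have hpow : ∀ i : ℕ, δE (u ^ i) = (i : E) * algebraMap K E a * u ^ i := by
    intro i; induction i with
    | zero => simp [hE1]
    | succ k ih =>
      rw [pow_succ, hEmul, ih, hueq]; push_cast; ring
  have hmonic : f.Monic := minpoly.monic halg
  have hnpos : 0 < n := minpoly.natDegree_pos halg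
  have hc0 : f.coeff 0 ≠ 0 := minpoly.coeff_zero_ne_zero halg hu
  have hfne : f ≠ 0 := minpoly.ne_zero halg
  have haeval : (Polynomial.aeval u) f = 0 := minpoly.aeval K u
  -- expand aeval as a sum
  have hsum : ∑ i ∈ range (n + 1), algebraMap K E (f.coeff i) * u ^ i = 0 := by
    have this : (Polynomial.aeval u) f = ∑ i ∈ range (n + 1), f.coeff i • u ^ i :=
      Polynomial.aeval_eq_sum_range u
    rw [haeval] at this
    simp only [Algebra.smul_def] at this
    exact this.symm
  -- differentiate
  have h1 : ∑ i ∈ range (n + 1),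
      (algebraMap K E (δ (f.coeff i)) + (i : E) * algebraMap K E (a * f.coeff i)) * u ^ i
      = 0 := by
    have h0 : δE (∑ i ∈ range (n + 1), algebraMap K E (f.coeff i) * u ^ i) = 0 := by
      rw [hsum]
      simpa using hEadd 0 0
    rw [← hDE, map_sum] at h0
    rw [← h0]
    apply Finset.sum_congr rfl
    intro i _
    rw [hDE, hEmul, hcomp, hpow]
    rw [map_mul]
    ring
  -- the lower-degree polynomial
  set g : Polynomial K := ∑ i ∈ range n,
      Polynomial.C (δ (f.coeff i) + ((i : K) - (n : K)) * (a * f.coeff i)) * Polynomial.X ^ i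
    with hg
  have hgeval : (Polynomial.aeval u) g = 0 := by
    have hT : ∑ i ∈ range (n + 1),
        algebraMap K E (δ (f.coeff i) + ((i : K) - (n : K)) * (a * f.coeff i)) * u ^ i = 0 := by
      have : ∑ i ∈ range (n + 1),
          algebraMap K E (δ (f.coeff i) + ((i : K) - (n : K)) * (a * f.coeff i)) * u ^ i
          = (∑ i ∈ range (n + 1),
              (algebraMap K E (δ (f.coeff i)) + (i : E) * algebraMap K E (a * f.coeff i)) * u ^ i)
            - (n : E) * algebraMap K E a *
              ∑ i ∈ range (n + 1), algebraMap K E (f.coeff i) * u ^ i := by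
        rw [Finset.mul_sum, ← Finset.sum_sub_distrib]
        apply Finset.sum_congr rfl
        intro i _
        rw [map_add, map_mul, map_sub, map_mul, map_natCast, map_natCast]
        ring
      rw [this, h1, hsum]
      ring
    rw [Finset.sum_range_succ] at hT
    have hcn : f.coeff n = 1 := hmonic.coeff_natDegree
    rw [hcn, hδ1] at hT
    simp only [sub_self, zero_mul, mul_one, zero_add, map_zero] at hT
    rw [hg, map_sum]
    simp only [map_mul, map_pow, aeval_C, aeval_X]
    simpa using hT
  have hgzero : g = 0 := by
    by_contra hgne
    have hle := minpoly.degree_le_of_ne_zero K u hgne hgeval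
    have hdeg : g.degree < (n : WithBot ℕ) := by
      apply lt_of_le_of_lt (Polynomial.degree_sum_le _ _)
      rw [Finset.sup_lt_iff (by exact_mod_cast WithBot.bot_lt_coe n)]
      intro i hi
      apply lt_of_le_of_lt (Polynomial.degree_C_mul_X_pow_le _ _)
      exact_mod_cast Finset.mem_range.mp hi
    rw [← hf] at hle
    rw [Polynomial.degree_eq_natDegree hfne, ← hn] at hle
    exact absurd hle (not_le.mpr hdeg)
  have hkey : δ (f.coeff 0) = (n : K) * a * f.coeff 0 := by
    have hc := congrArg (fun p => Polynomial.coeff p 0) hgzero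
    simp only [hg, Polynomial.finset_sum_coeff, Polynomial.coeff_C_mul,
      Polynomial.coeff_X_pow, Polynomial.coeff_zero, mul_ite, mul_one, mul_zero] at hc
    rw [Finset.sum_ite_eq (range n) 0] at hc
    rw [if_pos (Finset.mem_range.mpr hnpos)] at hc
    linear_combination hc
  have hnK : (n : K) ≠ 0 := Nat.cast_ne_zero.mpr hnpos.ne'
  have heq : a = (n : K)⁻¹ * δ (f.coeff 0) * (f.coeff 0)⁻¹ := by
    field_simp
    rw [hkey]; ring
  refine ⟨?_, heq⟩
  have hmem : δ (f.coeff 0) / f.coeff 0 ∈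
      Submodule.span ℚ {x : K | ∃ b : K, b ≠ 0 ∧ x = δ b / b} :=
    Submodule.subset_span ⟨f.coeff 0, hc0, rfl⟩
  have := Submodule.smul_mem _ ((n : ℚ)⁻¹) hmem
  convert this using 1
  rw [Rat.smul_def]
  push_cast
  rw [heq]
  field_simp
end

section
/- Let (K, δ) be a differential field of characteristic zero and let A be the ℚ-span of the logarithmic derivatives of K. Let (E, δ_E) be a differential extension and suppose a₁, ..., a_r ∈ K are elements of a subgroup A' ⊆ K with A' ∩ A = 0, and s₁, ..., s_r ∈ E \ {0} satisfy δ_E(sᵢ) = aᵢ·sᵢ. If the aᵢ are pairwise distinct, then s₁, ..., s_r are linearly independent over K. -/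
/-!
Induction on `r`. If `s₀ = ∑ⱼ cⱼ sⱼ` with `s₁, …, s_r` independent, applying `δ_E` and comparing
coefficients gives `δ(cⱼ) = (a₀ - aⱼ) cⱼ`, so every nonzero `cⱼ` exhibits `a₀ - aⱼ` as a
logarithmic derivative. Since `a₀ - aⱼ ∈ A'` meets `A` only in `0` and the `aᵢ` are distinct,
all `cⱼ` vanish, contradicting `s₀ ≠ 0`.
-/

open Submodule

namespace DifferentialModule

variable {K E : Type*} [Field K] [AddCommGroup E] [Module K E]

def logDerivs (δ : K → K) : Set K := {c | ∃ b : K, b ≠ 0 ∧ c = δ b / b}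

variable {δ : K → K} {δE : E → E}

theorem map_sum_smul_of_map_eq_smul {ι : Type*} [Fintype ι] {a : ι → K} {s : ι → E}
    (hadd : ∀ x y : E, δE (x + y) = δE x + δE y)
    (hsmul : ∀ (c : K) (x : E), δE (c • x) = δ c • x + c • δE x)
    (hseq : ∀ i, δE (s i) = a i • s i) (c : ι → K) :
    δE (∑ i, c i • s i) = ∑ i, (δ (c i) + c i * a i) • s i := by
  refine (map_sum (AddMonoidHom.mk' δE hadd) _ _).trans (Finset.sum_congr rfl fun i _ => ?_)
  simp only [AddMonoidHom.mk'_apply, hsmul, hseq, smul_smul, add_smul]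

theorem deriv_eq_sub_mul_of_sum_smul_eq {ι : Type*} [Fintype ι] {a : ι → K} {s : ι → E}
    (hadd : ∀ x y : E, δE (x + y) = δE x + δE y)
    (hsmul : ∀ (c : K) (x : E), δE (c • x) = δ c • x + c • δE x)
    (hs : LinearIndependent K s) (hseq : ∀ i, δE (s i) = a i • s i)
    {b : K} {x : E} (hx : δE x = b • x) {c : ι → K} (hc : ∑ i, c i • s i = x) (i : ι) :
    δ (c i) = (b - a i) * c i := by
  have hcoeff : ∑ i, (δ (c i) + c i * a i) • s i = ∑ i, (b * c i) • s i := by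
    rw [← map_sum_smul_of_map_eq_smul hadd hsmul hseq, hc, hx, ← hc, Finset.smul_sum]
    simp only [smul_smul]
  linear_combination Fintype.linearIndependent_iffₛ.mp hs _ _ hcoeff i

theorem linearIndependent_of_sub_notMem_logDerivs {r : ℕ} {a : Fin r → K} {s : Fin r → E}
    (hadd : ∀ x y : E, δE (x + y) = δE x + δE y)
    (hsmul : ∀ (c : K) (x : E), δE (c • x) = δ c • x + c • δE x)
    (hs0 : ∀ i, s i ≠ 0) (hseq : ∀ i, δE (s i) = a i • s i)
    (hlog : Pairwise fun i j => a i - a j ∉ logDerivs δ) :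
    LinearIndependent K s := by
  induction r with
  | zero => exact linearIndependent_empty_type
  | succ r ih =>
    have hind : LinearIndependent K (Fin.tail s) :=
      ih (fun i => hs0 _) (fun i => hseq _) (fun i j hij => hlog (Fin.succ_injective _ |>.ne hij))
    refine linearIndependent_finSucc.mpr ⟨hind, fun hspan => hs0 0 ?_⟩
    obtain ⟨c, hc⟩ := mem_span_range_iff_exists_fun K |>.mp hspan
    have hc0 : ∀ j, c j = 0 := by
      intro j
      by_contra hcj
      refine hlog (Fin.succ_ne_zero j).symm ⟨c j, hcj, ?_⟩
      rw [eq_div_iff hcj, deriv_eq_sub_mul_of_sum_smul_eq hadd hsmul hind (fun i => hseq _)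
        (hseq 0) hc j]
    simp [← hc, hc0]

end DifferentialModule

open DifferentialModule in
theorem stmt9_general {K E : Type*} [Field K] [CharZero K] [Field E] [Algebra K E]
    (δ : K → K)
    (δE : E → E)
    (hEadd : ∀ x y : E, δE (x + y) = δE x + δE y)
    (hEmul : ∀ x y : E, δE (x * y) = δE x * y + x * δE y)
    (hcomp : ∀ a : K, δE (algebraMap K E a) = algebraMap K E (δ a))
    (A' : AddSubgroup K)
    (hA' : ∀ x ∈ A',
      x ∈ Submodule.span ℚ {c : K | ∃ b : K, b ≠ 0 ∧ c = δ b / b} → x = 0)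
    {r : ℕ} (a : Fin r → K) (haA' : ∀ i, a i ∈ A') (hinj : Function.Injective a)
    (s : Fin r → E) (hs0 : ∀ i, s i ≠ 0)
    (hseq : ∀ i, δE (s i) = algebraMap K E (a i) * s i) :
    LinearIndependent K s := by
  have hEsmul : ∀ (c : K) (x : E), δE (c • x) = δ c • x + c • δE x := by
    intro c x
    simp only [Algebra.smul_def, hEmul, hcomp]
  refine linearIndependent_of_sub_notMem_logDerivs hEadd hEsmul hs0
    (fun i => by rw [hseq, Algebra.smul_def]) fun i j hij hlog => hij (hinj ?_)
  exact sub_eq_zero.mp <| hA' _ (sub_mem (haA' i) (haA' j)) (subset_span hlog)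

/-- Let `A` be the `ℚ`-span of the logarithmic derivatives of `K` and let `A'` be an
additive subgroup of `K` with `A' ∩ A = 0`. If `a₁, …, a_r ∈ A'` are pairwise distinct and
`s₁, …, s_r ∈ E \ {0}` satisfy `δ_E(sᵢ) = aᵢ sᵢ`, then `s₁, …, s_r` are linearly independent
over `K`. -/
theorem stmt9 {K E : Type*} [Field K] [CharZero K] [Field E] [Algebra K E]
    (δ : K → K)
    (hadd : ∀ a b : K, δ (a + b) = δ a + δ b)
    (hmul : ∀ a b : K, δ (a * b) = δ a * b + a * δ b)
    (δE : E → E)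
    (hEadd : ∀ x y : E, δE (x + y) = δE x + δE y)
    (hEmul : ∀ x y : E, δE (x * y) = δE x * y + x * δE y)
    (hcomp : ∀ a : K, δE (algebraMap K E a) = algebraMap K E (δ a))
    (A' : AddSubgroup K)
    (hA' : ∀ x ∈ A',
      x ∈ Submodule.span ℚ {c : K | ∃ b : K, b ≠ 0 ∧ c = δ b / b} → x = 0)
    {r : ℕ} (a : Fin r → K) (haA' : ∀ i, a i ∈ A') (hinj : Function.Injective a)
    (s : Fin r → E) (hs0 : ∀ i, s i ≠ 0)
    (hseq : ∀ i, δE (s i) = algebraMap K E (a i) * s i) :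
    LinearIndependent K s :=
  stmt9_general δ δE hEadd hEmul hcomp A' hA' a haA' hinj s hs0 hseq
end

section
/- Let (K, δ) be a differential field of characteristic zero, A the ℚ-span of its logarithmic derivatives, and A' ⊆ K an additive subgroup with A' ∩ A = 0. Let (E, δ_E) be a differential extension containing elements s_a (a ∈ A') with δ_E(s_a) = a·s_a, s_a·s_b = s_{a+b}, and s₀ = 1. Then a₁, ..., a_r ∈ A' are ℚ-linearly independent if and only if s_{a₁}, ..., s_{a_r} ∈ E are algebraically independent over K. -/
/-- Let `A` be the `ℚ`-span of the logarithmic derivatives of `K`, `A' ⊆ K` an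
additive subgroup with `A' ∩ A = 0`, and `{s_a}_{a ∈ A'}` a multiplicative family in `E` with
`δ_E(s_a) = a·s_a`, `s_a s_b = s_{a+b}`, `s₀ = 1`. Then `a₁, …, a_r ∈ A'` are `ℚ`-linearly
independent iff `s_{a₁}, …, s_{a_r}` are algebraically independent over `K`. -/
theorem stmt10 {K E : Type*} [Field K] [CharZero K] [Field E] [Algebra K E]
    (δ : K → K)
    (hadd : ∀ a b : K, δ (a + b) = δ a + δ b)
    (hmul : ∀ a b : K, δ (a * b) = δ a * b + a * δ b)
    (δE : E → E)
    (hEadd : ∀ x y : E, δE (x + y) = δE x + δE y)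
    (hEmul : ∀ x y : E, δE (x * y) = δE x * y + x * δE y)
    (hcomp : ∀ a : K, δE (algebraMap K E a) = algebraMap K E (δ a))
    (A' : AddSubgroup K)
    (hA' : ∀ x ∈ A',
      x ∈ Submodule.span ℚ {c : K | ∃ b : K, b ≠ 0 ∧ c = δ b / b} → x = 0)
    (s : A' → E)
    (hseq : ∀ a : A', δE (s a) = algebraMap K E (a : K) * s a)
    (hsmul : ∀ a b : A', s (a + b) = s a * s b)
    (hs1 : s 0 = 1)
    {r : ℕ} (a : Fin r → A') :
    LinearIndependent ℚ (fun i => ((a i : K))) ↔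
      AlgebraicIndependent K (fun i => s (a i)) := by
  -- basic facts
  have hδ1 : δ (1 : K) = 0 := by simpa using hmul 1 1
  have hsinv : ∀ x : A', s x * s (-x) = 1 := by
    intro x; rw [← hsmul, add_neg_cancel, hs1]
  have hsne : ∀ x : A', s x ≠ 0 := by
    intro x hx
    have := hsinv x; rw [hx, zero_mul] at this; exact one_ne_zero this.symm
  have hpow : ∀ (x : A') (n : ℕ), s (n • x) = s x ^ n := by
    intro x n
    induction n with
    | zero => simpa using hs1
    | succ n ih => rw [succ_nsmul, hsmul, ih, pow_succ]
  have hprod : ∀ (t : Finset (Fin r)) (m : Fin r → ℕ),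
      s (∑ i ∈ t, m i • a i) = ∏ i ∈ t, s (a i) ^ m i := by
    intro t m
    induction t using Finset.cons_induction with
    | empty => simpa using hs1
    | cons i t hi ih => rw [Finset.sum_cons, Finset.prod_cons, hsmul, hpow, ih]
  have hδE0 : δE 0 = 0 := by
    have h := hEadd 0 0
    rw [add_zero] at h
    exact (left_eq_add.mp h)
  have hδEsum : ∀ (t : Finset ↥A') (f : ↥A' → E),
      δE (∑ x ∈ t, f x) = ∑ x ∈ t, δE (f x) := by
    intro t f
    induction t using Finset.cons_induction with
    | empty => simpa using hδE0
    | cons i t hi ih => rw [Finset.sum_cons, Finset.sum_cons, hEadd, ih]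
  -- key linear independence over K of the family s
  classical
  have key : ∀ (n : ℕ) (t : Finset ↥A') (c : ↥A' → K), t.card ≤ n →
      (∑ x ∈ t, algebraMap K E (c x) * s x) = 0 → ∀ x ∈ t, c x = 0 := by
    intro n
    induction n with
    | zero =>
      intro t c ht _ x hx
      rw [Finset.card_eq_zero.mp (Nat.le_zero.mp ht)] at hx
      exact absurd hx (Finset.notMem_empty x)
    | succ n ih =>
      intro t c htc hsum x hx
      by_contra hcx
      set t' := t.filter (fun y => c y ≠ 0) with ht'
      have hx' : x ∈ t' := Finset.mem_filter.mpr ⟨hx, hcx⟩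
      have hsum' : ∑ y ∈ t', algebraMap K E (c y) * s y = 0 := by
        rw [ht', Finset.sum_filter_of_ne]
        · exact hsum
        · intro y hy h0 hc
          exact h0 (by rw [hc, map_zero, zero_mul])
      set c' : ↥A' → K := fun y => c y / c x with hc'
      have hcxE : algebraMap K E (c x) ≠ 0 := fun h => hcx ((map_eq_zero _).mp h)
      have hsum1 : ∑ y ∈ t', algebraMap K E (c' y) * s y = 0 := by
        have heq : ∑ y ∈ t', algebraMap K E (c' y) * s y
            = (algebraMap K E (c x))⁻¹ * ∑ y ∈ t', algebraMap K E (c y) * s y := by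
          rw [Finset.mul_sum]
          refine Finset.sum_congr rfl fun y hy => ?_
          rw [hc']
          simp only [div_eq_mul_inv, map_mul, map_inv₀]
          ring
        rw [heq, hsum', mul_zero]
      have h1 : ∑ y ∈ t', δE (algebraMap K E (c' y) * s y) = 0 := by
        rw [← hδEsum, hsum1, hδE0]
      have h2 : ∑ y ∈ t', algebraMap K E (δ (c' y) + c' y * (y : K)) * s y = 0 := by
        rw [← h1]
        refine Finset.sum_congr rfl fun y hy => ?_
        rw [hEmul, hcomp, hseq, map_add, map_mul]
        ring
      have h3 : ∑ y ∈ t', algebraMap K E (c' y * (x : K)) * s y = 0 := by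
        have := congrArg (fun z => algebraMap K E ((x : K)) * z) hsum1
        simp only [mul_zero, Finset.mul_sum] at this
        rw [← this]
        refine Finset.sum_congr rfl fun y hy => ?_
        rw [map_mul]
        ring
      have hder : ∑ y ∈ t', algebraMap K E (δ (c' y) + c' y * ((y : K) - x)) * s y = 0 := by
        have hsplit : ∀ y : ↥A', algebraMap K E (δ (c' y) + c' y * ((y : K) - x)) * s y
            = algebraMap K E (δ (c' y) + c' y * (y : K)) * s y
              - algebraMap K E (c' y * (x : K)) * s y := by
          intro y
          rw [map_add, map_mul, map_add, map_mul, map_mul, map_sub]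
          ring
        rw [Finset.sum_congr rfl (fun y _ => hsplit y), Finset.sum_sub_distrib, h2, h3,
          sub_zero]
      have hcx1 : c' x = 1 := div_self hcx
      have hdx : δ (c' x) + c' x * ((x : K) - x) = 0 := by rw [hcx1, hδ1]; ring
      have herase : ∑ y ∈ t'.erase x,
          algebraMap K E (δ (c' y) + c' y * ((y : K) - x)) * s y = 0 := by
        rw [← Finset.add_sum_erase t' _ hx', hdx, map_zero, zero_mul, zero_add] at hder
        exact hder
      have hcard : (t'.erase x).card ≤ n := by
        have h1 : t'.card ≤ t.card := Finset.card_filter_le _ _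
        have h2 := Finset.card_erase_of_mem hx'
        omega
      have hall := ih (t'.erase x) _ hcard herase
      have hempty : t'.erase x = ∅ := by
        rw [Finset.eq_empty_iff_forall_notMem]
        intro y hy
        have hy' := Finset.mem_of_mem_erase hy
        have hyne : y ≠ x := Finset.ne_of_mem_erase hy
        have hcy : c y ≠ 0 := (Finset.mem_filter.mp hy').2
        have hcy' : c' y ≠ 0 := div_ne_zero hcy hcx
        have hd := hall y hy
        have hlog : ((x : K)) - (y : K) = δ (c' y) / c' y := by
          field_simp
          linear_combination -hd
        have hmem : ((x - y : ↥A') : K)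
            ∈ Submodule.span ℚ {c : K | ∃ b, b ≠ 0 ∧ c = δ b / b} := by
          apply Submodule.subset_span
          exact ⟨c' y, hcy', by push_cast; rw [hlog]⟩
        have h0 := hA' _ (x - y).2 hmem
        push_cast at h0
        exact hyne (Subtype.ext (by linear_combination -h0))
      have ht'x : t' = {x} := by
        rcases (Finset.erase_eq_empty_iff t' x).mp hempty with h | h
        · exact absurd (h ▸ hx') (Finset.notMem_empty x)
        · exact h
      rw [ht'x, Finset.sum_singleton, hcx1, map_one, one_mul] at hsum1
      exact hsne x hsum1
  have hLIs : LinearIndependent K s := by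
    rw [linearIndependent_iff']
    intro t g hg i hi
    exact key t.card t g le_rfl (by simpa [Algebra.smul_def] using hg) i hi
  constructor
  · -- linear independence → algebraic independence
    intro hLI
    rw [algebraicIndependent_iff]
    intro p hp
    set B : (Fin r →₀ ℕ) → ↥A' := fun m => ∑ i, m i • a i with hB
    have hBinj : Function.Injective B := by
      intro m m' hmm
      have h1 : ((∑ i, m i • a i : ↥A') : K) = ((∑ i, m' i • a i : ↥A') : K) :=
        congrArg _ hmm
      push_cast at h1
      have h2 : ∑ i, ((m i : ℚ) - (m' i : ℚ)) • ((a i : K)) = 0 := by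
        simp only [sub_smul, Finset.sum_sub_distrib, Nat.cast_smul_eq_nsmul]
        rw [sub_eq_zero]
        exact_mod_cast h1
      have h3 := Fintype.linearIndependent_iff.mp hLI _ h2
      ext i
      have := h3 i
      rw [sub_eq_zero] at this
      exact_mod_cast this
    have hLIc := hLIs.comp B hBinj
    have h0 : ∑ m ∈ p.support, (MvPolynomial.coeff m p) • ((s ∘ B) m) = 0 := by
      rw [← hp, MvPolynomial.aeval_def, MvPolynomial.eval₂_eq']
      refine Finset.sum_congr rfl fun m hm => ?_
      rw [Algebra.smul_def, Function.comp_apply, hB]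
      rw [hprod Finset.univ (fun i => m i)]
    have hz := linearIndependent_iff'.mp hLIc p.support _ h0
    ext m
    by_cases hm : m ∈ p.support
    · simpa using hz m hm
    · simpa using MvPolynomial.notMem_support_iff.mp hm
  · -- algebraic independence → linear independence
    intro hAI
    rw [← LinearIndependent.iff_fractionRing ℤ ℚ, Fintype.linearIndependent_iff]
    intro g hg i
    have hz : (∑ j, g j • a j : ↥A') = 0 := by
      apply Subtype.coe_injective
      push_cast
      exact hg
    set p : Fin r → ℕ := fun j => (g j).toNat with hpdef
    set q : Fin r → ℕ := fun j => (-(g j)).toNat with hqdef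
    have hpq : ∀ j, (p j : ℤ) - (q j : ℤ) = g j := by
      intro j; simp only [hpdef, hqdef]; omega
    have hsum_eq : (∑ j, p j • a j : ↥A') = ∑ j, q j • a j := by
      have h : (∑ j, (p j : ℤ) • a j : ↥A') - ∑ j, (q j : ℤ) • a j = 0 := by
        rw [← Finset.sum_sub_distrib, ← hz]
        refine Finset.sum_congr rfl fun j _ => ?_
        rw [← sub_smul, hpq]
      rw [sub_eq_zero] at h
      simpa [natCast_zsmul] using h
    have hE : (∏ j, s (a j) ^ p j) = ∏ j, s (a j) ^ q j := by
      rw [← hprod Finset.univ, ← hprod Finset.univ, hsum_eq]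
    have hmon : ∀ f : Fin r → ℕ,
        (∏ j, (MvPolynomial.X j ^ f j) : MvPolynomial (Fin r) K)
          = MvPolynomial.monomial (Finsupp.equivFunOnFinite.symm f) 1 := by
      intro f
      rw [← MvPolynomial.prod_X_pow_eq_monomial]
      symm
      apply Finset.prod_subset (Finset.subset_univ _)
      intro x _ hx
      rw [Finsupp.notMem_support_iff] at hx
      simp [hx]
    have hPE : (MvPolynomial.aeval (fun i => s (a i)))
          (MvPolynomial.monomial (Finsupp.equivFunOnFinite.symm p) (1 : K))
        = (MvPolynomial.aeval (fun i => s (a i)))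
          (MvPolynomial.monomial (Finsupp.equivFunOnFinite.symm q) (1 : K)) := by
      rw [← hmon, ← hmon, map_prod, map_prod]
      simp only [map_pow, MvPolynomial.aeval_X]
      exact hE
    have hP := hAI hPE
    have hfin := MvPolynomial.monomial_left_injective (one_ne_zero (α := K)) hP
    have hfe : p = q := Finsupp.equivFunOnFinite.symm.injective hfin
    have := congrFun hfe i
    have := hpq i
    omega
end

section
/- Let (K, δ) be a differential field of characteristic zero and (E, δ_E) an algebraic differential extension. Then there exists w ∈ E with δ_E(w) = 1 if and only if there exists v ∈ K with δ(v) = 1. -/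
/-!
If `w′ = 1` and `p = X ^ n + a X ^ (n - 1) + ⋯` is the minimal polynomial of `w` over `K`,
differentiating `p(w) = 0` shows that `w` is a root of `p^δ + p'`, where `p^δ` differentiates
the coefficients. This polynomial has degree `< n`, so it vanishes, and its coefficient of
`X ^ (n - 1)` gives `a′ + n = 0`. Hence `(-a / n)′ = 1`.
-/

open Polynomial
open scoped Differential

namespace Differential

variable {K : Type*} [Field K] [Differential K]

lemma degree_mapCoeffs_add_derivative_lt {p : K[X]} (hp : p.Monic) :
    (mapCoeffs p + derivative p).degree < p.degree := by
  rw [degree_eq_natDegree hp.ne_zero, degree_lt_iff_coeff_zero]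
  intro m hm
  rw [coeff_add, coeff_mapCoeffs, coeff_derivative,
    coeff_eq_zero_of_natDegree_lt (Nat.lt_succ_of_le hm), zero_mul, add_zero]
  rcases hm.eq_or_lt with rfl | hlt
  · rw [hp.coeff_natDegree, Derivation.map_one_eq_zero]
  · rw [coeff_eq_zero_of_natDegree_lt hlt, map_zero]

lemma coeff_mapCoeffs_add_derivative_natDegree_sub_one {p : K[X]} (hp : p.Monic)
    (h : 0 < p.natDegree) :
    (mapCoeffs p + derivative p).coeff (p.natDegree - 1) =
      (p.coeff (p.natDegree - 1))′ + p.natDegree := by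
  rw [coeff_add, coeff_mapCoeffs, coeff_derivative, Nat.sub_add_cancel h, hp.coeff_natDegree,
    one_mul, ← Nat.cast_add_one, Nat.sub_add_cancel h]

variable {E : Type*} [CommRing E] [Differential E] [Algebra K E] [DifferentialAlgebra K E]

lemma aeval_mapCoeffs_add_derivative_eq_zero {w : E} (hw : w′ = 1) {p : K[X]}
    (hp : aeval w p = 0) : aeval w (mapCoeffs p + derivative p) = 0 := by
  rw [map_add, ← mul_one (aeval w (derivative p)), ← hw, ← deriv_aeval_eq, hp, map_zero]

lemma mapCoeffs_minpoly_add_derivative_eq_zero [Nontrivial E] {w : E} (hw : w′ = 1)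
    (hint : IsIntegral K w) : mapCoeffs (minpoly K w) + derivative (minpoly K w) = 0 :=
  eq_zero_of_dvd_of_degree_lt
    (minpoly.dvd K w (aeval_mapCoeffs_add_derivative_eq_zero hw (minpoly.aeval K w)))
    (degree_mapCoeffs_add_derivative_lt (minpoly.monic hint))

theorem exists_deriv_eq_one_of_isIntegral [CharZero K] [Nontrivial E] {w : E} (hw : w′ = 1)
    (hint : IsIntegral K w) : ∃ v : K, v′ = 1 := by
  set p := minpoly K w
  have hn : 0 < p.natDegree := minpoly.natDegree_pos hint
  have hcoeff := coeff_mapCoeffs_add_derivative_natDegree_sub_one (minpoly.monic hint) hn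
  rw [mapCoeffs_minpoly_add_derivative_eq_zero hw hint, coeff_zero, eq_comm,
    add_eq_zero_iff_eq_neg] at hcoeff
  refine ⟨(p.natDegree⁻¹ : K) • -p.coeff (p.natDegree - 1), ?_⟩
  rw [map_inv_natCast_smul Differential.deriv K K, map_neg, hcoeff, neg_neg, smul_eq_mul,
    inv_mul_cancel₀ (Nat.cast_ne_zero.mpr hn.ne')]

end Differential

def Derivation.ofAddMul {R : Type*} [CommRing R] (δ : R → R)
    (hadd : ∀ a b, δ (a + b) = δ a + δ b) (hmul : ∀ a b, δ (a * b) = δ a * b + a * δ b) :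
    Derivation ℤ R R :=
  Derivation.mk' (AddMonoidHom.mk' δ hadd).toIntLinearMap fun a b => by
    show δ (a * b) = a * δ b + b * δ a
    rw [hmul]
    ring

/-- If `(E, δ_E)` is an algebraic differential extension of a differential field
`(K, δ)` of characteristic zero, then `E` contains an element with derivative `1` iff `K` does. -/
theorem stmt12 {K E : Type*} [Field K] [CharZero K] [Field E] [Algebra K E]
    [Algebra.IsAlgebraic K E]
    (δ : K → K)
    (hadd : ∀ a b : K, δ (a + b) = δ a + δ b)
    (hmul : ∀ a b : K, δ (a * b) = δ a * b + a * δ b)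
    (δE : E → E)
    (hEadd : ∀ x y : E, δE (x + y) = δE x + δE y)
    (hEmul : ∀ x y : E, δE (x * y) = δE x * y + x * δE y)
    (hcomp : ∀ a : K, δE (algebraMap K E a) = algebraMap K E (δ a)) :
    (∃ w : E, δE w = 1) ↔ (∃ v : K, δ v = 1) := by
  let _ : Differential K := ⟨Derivation.ofAddMul δ hadd hmul⟩
  let _ : Differential E := ⟨Derivation.ofAddMul δE hEadd hEmul⟩
  have _ : DifferentialAlgebra K E := ⟨hcomp⟩
  constructor
  · rintro ⟨w, hw⟩
    exact Differential.exists_deriv_eq_one_of_isIntegral (E := E) hw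
      (Algebra.IsIntegral.isIntegral w)
  · rintro ⟨v, hv⟩
    exact ⟨algebraMap K E v, by rw [hcomp, hv, map_one]⟩
end

section
/- Let F be a field of characteristic zero, K = F(t) with derivation δ(a) = 0 for a ∈ F and δ(t) = t. Let λ = p/q ∈ ℚ in lowest terms with q ≥ 1, and let (E, δ_E) be a finite differential extension of (K, δ) containing a nonzero z with δ_E(z) = (1/q)·z. Then z^q = c·t for some constant c ∈ C_E, and [E : K] ≥ q. -/
open Polynomial

/-- Top coefficient of `X * f' * g` at degree `deg f + deg g`. -/
private lemma stmt15_coeff_top {F : Type*} [Field F] [CharZero F] (f g : F[X]) :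
    (X * derivative f * g).coeff (f.natDegree + g.natDegree)
      = (f.natDegree : F) * f.leadingCoeff * g.leadingCoeff := by
  rcases Nat.eq_zero_or_pos f.natDegree with hdf | hdf
  · obtain ⟨a, rfl⟩ := Polynomial.natDegree_eq_zero.mp hdf
    simp
  · have hd' : (derivative f).natDegree = f.natDegree - 1 :=
      Polynomial.natDegree_eq_of_degree_eq_some (degree_derivative_eq f hdf)
    have hd'ne : derivative f ≠ 0 := by
      intro h
      have := degree_derivative_eq f hdf
      rw [h, degree_zero] at this
      exact absurd this (by simp)
    have hXd : (X * derivative f).natDegree = f.natDegree := by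
      rw [natDegree_mul X_ne_zero hd'ne, natDegree_X, hd']
      omega
    have hlead : (X * derivative f).leadingCoeff = (f.natDegree : F) * f.leadingCoeff := by
      obtain ⟨k, hk⟩ : ∃ k, f.natDegree = k + 1 := ⟨f.natDegree - 1, by omega⟩
      rw [leadingCoeff, hXd, hk, coeff_X_mul, coeff_derivative, leadingCoeff, hk]
      push_cast
      ring
    calc (X * derivative f * g).coeff (f.natDegree + g.natDegree)
        = (X * derivative f * g).coeff ((X * derivative f).natDegree + g.natDegree) := by
          rw [hXd]
      _ = (X * derivative f).leadingCoeff * g.leadingCoeff :=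
          coeff_mul_degree_add_degree _ _
      _ = (f.natDegree : F) * f.leadingCoeff * g.leadingCoeff := by rw [hlead]

/-- The derivation determined by `δ|_F = 0`, `δ X = X` acts on polynomials as `f ↦ X f'`. -/
private lemma stmt15_delta_poly {F : Type*} [Field F] [CharZero F]
    (δ : RatFunc F → RatFunc F)
    (hadd : ∀ x y : RatFunc F, δ (x + y) = δ x + δ y)
    (hmul : ∀ x y : RatFunc F, δ (x * y) = δ x * y + x * δ y)
    (hF : ∀ a : F, δ (algebraMap F (RatFunc F) a) = 0)
    (ht : δ RatFunc.X = RatFunc.X) (f : F[X]) :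
    δ (algebraMap F[X] (RatFunc F) f) = algebraMap F[X] (RatFunc F) (X * derivative f) := by
  induction f using Polynomial.induction_on with
  | C a =>
      have h1 : algebraMap F[X] (RatFunc F) (C a) = algebraMap F (RatFunc F) a := by
        rw [RatFunc.algebraMap_C, RatFunc.algebraMap_eq_C]
      rw [h1, hF]
      simp
  | add p q hp hq =>
      rw [map_add, hadd, hp, hq, ← map_add]
      congr 1
      rw [derivative_add]
      ring
  | monomial n a ih =>
      have h1 : (C a * X ^ (n + 1) : F[X]) = (C a * X ^ n) * X := by ring
      rw [h1, map_mul, hmul, ih, RatFunc.algebraMap_X, ht, ← RatFunc.algebraMap_X (K := F),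
        ← map_mul, ← map_mul, ← map_add]
      congr 1
      rw [show derivative (C a * X ^ n * X) = derivative (C a * X ^ n) * X + C a * X ^ n by
        rw [derivative_mul, derivative_X, mul_one]]
      ring

/-- If `q·δa = m·a` for a nonzero rational function `a`, then `q ∣ m`. -/
private lemma stmt15_dvd {F : Type*} [Field F] [CharZero F]
    (δ : RatFunc F → RatFunc F)
    (hadd : ∀ x y : RatFunc F, δ (x + y) = δ x + δ y)
    (hmul : ∀ x y : RatFunc F, δ (x * y) = δ x * y + x * δ y)
    (hF : ∀ a : F, δ (algebraMap F (RatFunc F) a) = 0)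
    (ht : δ RatFunc.X = RatFunc.X)
    (q m : ℕ) (hq : 0 < q) (a : RatFunc F) (ha : a ≠ 0)
    (heq : (q : RatFunc F) * δ a = (m : RatFunc F) * a) : q ∣ m := by
  set φ := algebraMap F[X] (RatFunc F) with hφ
  have hφinj : Function.Injective φ := RatFunc.algebraMap_injective F
  have hf : a.num ≠ 0 := RatFunc.num_ne_zero ha
  have hg : φ a.denom ≠ 0 := by
    intro h
    exact a.denom_ne_zero (hφinj (by simpa using h))
  have hkey : a * φ a.denom = φ a.num := by
    have h := RatFunc.num_div_denom a
    rw [div_eq_iff hg] at h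
    exact h.symm
  have hdiff : δ a * φ a.denom + a * φ (X * derivative a.denom) = φ (X * derivative a.num) := by
    have h := hmul a (φ a.denom)
    rw [hkey, stmt15_delta_poly δ hadd hmul hF ht, stmt15_delta_poly δ hadd hmul hF ht] at h
    exact h.symm
  have hpoly : φ ((q : F[X]) * (X * derivative a.num * a.denom)) =
      φ ((m : F[X]) * (a.num * a.denom) + (q : F[X]) * (X * derivative a.denom * a.num)) := by
    simp only [map_mul, map_add, map_natCast] at hdiff ⊢
    linear_combination (-(q : RatFunc F) * φ a.denom) * hdiff
      + (φ a.denom * φ a.denom) * heq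
      + ((m : RatFunc F) * φ a.denom + (q : RatFunc F) * φ X * φ (derivative a.denom)) * hkey
  have hP := hφinj hpoly
  have hc := congrArg (fun P : F[X] => P.coeff (a.num.natDegree + a.denom.natDegree)) hP
  simp only [← C_eq_natCast, coeff_C_mul, coeff_add] at hc
  rw [stmt15_coeff_top a.num a.denom, coeff_mul_degree_add_degree,
    show a.num.natDegree + a.denom.natDegree = a.denom.natDegree + a.num.natDegree from
      Nat.add_comm _ _, stmt15_coeff_top a.denom a.num] at hc
  have hlf : a.num.leadingCoeff ≠ 0 := leadingCoeff_ne_zero.mpr hf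
  have hlg : a.denom.leadingCoeff ≠ 0 := leadingCoeff_ne_zero.mpr a.denom_ne_zero
  have hfac : (((q * a.num.natDegree : ℕ) : F) - ((m + q * a.denom.natDegree : ℕ) : F))
      * (a.num.leadingCoeff * a.denom.leadingCoeff) = 0 := by
    push_cast
    linear_combination hc
  have hcast : ((q * a.num.natDegree : ℕ) : F) = ((m + q * a.denom.natDegree : ℕ) : F) := by
    rcases mul_eq_zero.mp hfac with h | h
    · exact sub_eq_zero.mp h
    · exact absurd h (mul_ne_zero hlf hlg)
  have hnat : q * a.num.natDegree = m + q * a.denom.natDegree := Nat.cast_injective hcast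
  refine ⟨a.num.natDegree - a.denom.natDegree, ?_⟩
  rw [Nat.mul_sub]
  exact (Nat.sub_eq_of_eq_add hnat).symm

/-- Let `K = F(t)` with `δ|_F = 0`, `δ(t) = t`, and let `(E, δ_E)` be a finite
differential extension of `(K, δ)` containing a nonzero `z` with `δ_E(z) = (1/q)·z` (`q ≥ 1`).
Then `z^q = c·t` for some constant `c` of `E`, and `[E : K] ≥ q`. -/
theorem stmt15 {F E : Type*} [Field F] [CharZero F] [Field E]
    [Algebra (RatFunc F) E] [FiniteDimensional (RatFunc F) E]
    (δ : RatFunc F → RatFunc F)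
    (hadd : ∀ x y : RatFunc F, δ (x + y) = δ x + δ y)
    (hmul : ∀ x y : RatFunc F, δ (x * y) = δ x * y + x * δ y)
    (hF : ∀ a : F, δ (algebraMap F (RatFunc F) a) = 0)
    (ht : δ RatFunc.X = RatFunc.X)
    (δE : E → E)
    (hEadd : ∀ x y : E, δE (x + y) = δE x + δE y)
    (hEmul : ∀ x y : E, δE (x * y) = δE x * y + x * δE y)
    (hcomp : ∀ a : RatFunc F, δE (algebraMap (RatFunc F) E a) = algebraMap (RatFunc F) E (δ a))
    (q : ℕ) (hq : 0 < q)
    (z : E) (hz : z ≠ 0) (hzeq : δE z = ((q : E))⁻¹ * z) :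
    (∃ c : E, δE c = 0 ∧ z ^ q = c * algebraMap (RatFunc F) E RatFunc.X) ∧
      q ≤ Module.finrank (RatFunc F) E := by
  haveI : CharZero (RatFunc F) :=
    charZero_of_injective_algebraMap (algebraMap F (RatFunc F)).injective
  haveI : CharZero E :=
    charZero_of_injective_algebraMap (algebraMap (RatFunc F) E).injective
  have hqE : (q : E) ≠ 0 := Nat.cast_ne_zero.mpr hq.ne'
  have hqK : (q : RatFunc F) ≠ 0 := Nat.cast_ne_zero.mpr hq.ne'
  have hδE0 : δE 0 = 0 := by
    have h := hEadd 0 0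
    rw [add_zero] at h
    exact left_eq_add.mp h
  have hδE1 : δE 1 = 0 := by
    have h := hEmul 1 1
    rw [mul_one, one_mul, mul_one] at h
    exact left_eq_add.mp h
  have hδ1 : δ 1 = 0 := by
    have h := hmul 1 1
    rw [mul_one, one_mul, mul_one] at h
    exact left_eq_add.mp h
  have hpow : ∀ i : ℕ, δE (z ^ i) = (i : E) * (q : E)⁻¹ * z ^ i := by
    intro i
    induction i with
    | zero => simpa using hδE1
    | succ k ihk =>
        rw [pow_succ, hEmul, ihk, hzeq]
        push_cast
        ring
  set t := algebraMap (RatFunc F) E RatFunc.X with htdef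
  have htne : t ≠ 0 := by
    rw [htdef]
    simpa using RatFunc.X_ne_zero (K := F)
  have hδt : δE t = t := by rw [htdef, hcomp, ht]
  have hδtinv : δE t⁻¹ = -t⁻¹ := by
    have h := hEmul t t⁻¹
    rw [mul_inv_cancel₀ htne, hδE1, hδt] at h
    have h3 : t * δE t⁻¹ = -1 := by
      have : t * t⁻¹ = 1 := mul_inv_cancel₀ htne
      linear_combination -h - this
    have h4 : δE t⁻¹ = t⁻¹ * (t * δE t⁻¹) := by
      rw [← mul_assoc, inv_mul_cancel₀ htne, one_mul]
    rw [h4, h3]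
    ring
  refine ⟨⟨z ^ q * t⁻¹, ?_, ?_⟩, ?_⟩
  · rw [hEmul, hpow q, hδtinv, mul_inv_cancel₀ hqE]
    ring
  · rw [mul_assoc, inv_mul_cancel₀ htne, mul_one]
  -- degree bound
  have hzint : IsIntegral (RatFunc F) z := IsIntegral.of_finite (RatFunc F) z
  set p := minpoly (RatFunc F) z with hpdef
  set n := p.natDegree with hndef
  have hn1 : 0 < n := minpoly.natDegree_pos hzint
  have hmonic : p.Monic := minpoly.monic hzint
  have hpn : p.coeff n = 1 := hmonic.coeff_natDegree
  set r : (RatFunc F)[X] :=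
    ∑ i ∈ Finset.range (n + 1),
      C (δ (p.coeff i) + (q : RatFunc F)⁻¹ * i * p.coeff i) * X ^ i with hrdef
  have hrc : ∀ j, r.coeff j =
      if j ∈ Finset.range (n + 1)
      then δ (p.coeff j) + (q : RatFunc F)⁻¹ * j * p.coeff j else 0 := by
    intro j
    rw [hrdef, finset_sum_coeff]
    simp only [coeff_C_mul, coeff_X_pow, mul_ite, mul_one, mul_zero]
    exact Finset.sum_ite_eq (Finset.range (n + 1)) j _
  have hroot : aeval z r = 0 := by
    have h0 : δE (aeval z p) = 0 := by rw [minpoly.aeval]; exact hδE0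
    rw [aeval_eq_sum_range] at h0
    have hsum : δE (∑ i ∈ Finset.range (n + 1), p.coeff i • z ^ i)
        = ∑ i ∈ Finset.range (n + 1), δE (p.coeff i • z ^ i) :=
      map_sum (AddMonoidHom.mk' δE hEadd) _ _
    rw [hsum] at h0
    have hterm : ∀ i ∈ Finset.range (n + 1), δE (p.coeff i • z ^ i)
        = algebraMap (RatFunc F) E (δ (p.coeff i) + (q : RatFunc F)⁻¹ * i * p.coeff i) * z ^ i := by
      intro i _
      rw [Algebra.smul_def, hEmul, hcomp, hpow, map_add, map_mul, map_mul, map_inv₀,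
        map_natCast, map_natCast]
      ring
    rw [Finset.sum_congr rfl hterm] at h0
    rw [hrdef, map_sum]
    simp only [map_mul, aeval_C, aeval_X_pow]
    exact h0
  have hdvd : p ∣ r := minpoly.dvd _ _ hroot
  have hrcn : r.coeff n = (n : RatFunc F) * (q : RatFunc F)⁻¹ := by
    rw [hrc n, if_pos (Finset.mem_range.mpr (by omega)), hpn, hδ1]
    ring
  have hnK : (n : RatFunc F) ≠ 0 := Nat.cast_ne_zero.mpr hn1.ne'
  have hrne : r ≠ 0 := by
    intro h
    rw [h, coeff_zero] at hrcn
    exact (mul_ne_zero hnK (inv_ne_zero hqK)) hrcn.symm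
  have hdeg : r.natDegree ≤ n := by
    rw [hrdef]
    refine natDegree_sum_le_of_forall_le _ _ fun i hi => ?_
    exact (natDegree_C_mul_X_pow_le _ _).trans (by
      have := Finset.mem_range.mp hi; omega)
  obtain ⟨s, hs⟩ := hdvd
  have hpne : p ≠ 0 := minpoly.ne_zero hzint
  have hsne : s ≠ 0 := by
    rintro rfl
    rw [mul_zero] at hs
    exact hrne hs
  have hds : s.natDegree = 0 := by
    have h := natDegree_mul hpne hsne
    rw [← hs] at h
    omega
  obtain ⟨u, hu⟩ := natDegree_eq_zero.mp hds
  have hun : (n : RatFunc F) * (q : RatFunc F)⁻¹ = u := by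
    have h : r.coeff n = p.coeff n * u := by rw [hs, ← hu, coeff_mul_C]
    rw [hrcn, hpn, one_mul] at h
    exact h
  have h0c : δ (p.coeff 0) = p.coeff 0 * u := by
    have h : r.coeff 0 = p.coeff 0 * u := by rw [hs, ← hu, coeff_mul_C]
    rw [hrc 0, if_pos (Finset.mem_range.mpr (by omega))] at h
    simpa using h
  have ha0 : p.coeff 0 ≠ 0 := minpoly.coeff_zero_ne_zero hzint hz
  have heig : (q : RatFunc F) * δ (p.coeff 0) = (n : RatFunc F) * p.coeff 0 := by
    rw [h0c, ← hun]
    field_simp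
  have hdvdqn : q ∣ n := stmt15_dvd δ hadd hmul hF ht q n hq _ ha0 heig
  exact (Nat.le_of_dvd hn1 hdvdqn).trans (minpoly.natDegree_le z)
end

section
/- Let F be a field of characteristic zero, K = F(t), c ∈ F nonzero, m ≠ 1 an integer, and δ_{c,m} the derivation on K with δ_{c,m}|_F = 0 and δ_{c,m}(t) = c·t^m. Then for every a ∈ F̄(t) \ F̄, the logarithmic derivative δ_{c,m}(a)·a⁻¹ does not lie in F̄. Consequently no nonzero element of F̄ is in the ℚ-span of logarithmic derivatives of (F̄(t), δ_{c,m}). -/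
/-!
Write `a = p / q` in lowest terms. Then `δ a = W(q, p) · c t^m / q²` with `W(q, p) = q p' - q' p`,
so `δ a = β a` with `β` constant clears denominators to `c t^k W(q, p) = β t^n p q`, where
`m = k - n`. If `β = 0`, coprimality forces `p' = q' = 0`. Otherwise, at a root `α` of `p q` the
Wronskian vanishes to order exactly one less than `p q` (characteristic zero, coprimality), and
the powers of `t` can make up the difference only if `α = 0` and `m = 1`. Hence `p q` has no root
and `a` is constant.

The logarithmic derivatives form an additive group, so some positive multiple of any element of
their `ℚ`-span is itself a logarithmic derivative `δ b / b`; for a nonzero constant, `b` would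
contradict the first part.
-/

open Polynomial

namespace Polynomial

section CommRing

variable {R : Type*} [CommRing R]

theorem rootMultiplicity_neg (p : R[X]) (a : R) :
    (-p).rootMultiplicity a = p.rootMultiplicity a := by
  classical
  simp [rootMultiplicity_eq_multiplicity, multiplicity_neg]

theorem rootMultiplicity_sub_of_pow_dvd {p q : R[X]} {a : R} (hp : p ≠ 0)
    (hq : (X - C a) ^ (p.rootMultiplicity a + 1) ∣ q) :
    (p - q).rootMultiplicity a = p.rootMultiplicity a := by
  have hp_not_dvd := (rootMultiplicity_le_iff hp a _).mp le_rfl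
  have hpq : p - q ≠ 0 := by
    rw [sub_ne_zero]; rintro rfl; exact hp_not_dvd hq
  apply le_antisymm
  · refine (rootMultiplicity_le_iff hpq a _).mpr fun h => hp_not_dvd ?_
    simpa only [sub_add_cancel] using dvd_add h hq
  · exact (le_rootMultiplicity_iff hpq).mpr <| dvd_sub (pow_rootMultiplicity_dvd p a)
      ((pow_dvd_pow _ (Nat.le_succ _)).trans hq)

end CommRing

variable {R : Type*} [CommRing R] [IsDomain R]

theorem rootMultiplicity_X_pow [DecidableEq R] (a : R) (n : ℕ) :
    (X ^ n : R[X]).rootMultiplicity a = if a = 0 then n else 0 := by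
  split_ifs with ha
  · simpa [ha] using rootMultiplicity_X_sub_C_pow (0 : R) n
  · exact rootMultiplicity_eq_zero (by simp [ha])

variable [CharZero R]

theorem derivative_ne_zero_of_isRoot {p : R[X]} {a : R} (hp : p ≠ 0) (ha : p.IsRoot a) :
    derivative p ≠ 0 := by
  intro h
  obtain ⟨b, rfl⟩ := natDegree_eq_zero.mp (derivative_eq_zero.mp h)
  simp_all

theorem rootMultiplicity_wronskian_of_isRoot {p q : R[X]} {a : R} (hp : p ≠ 0)
    (hpa : p.IsRoot a) (hqa : ¬ q.IsRoot a) :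
    (wronskian q p).rootMultiplicity a = p.rootMultiplicity a - 1 := by
  have hq : q ≠ 0 := by rintro rfl; exact hqa (by simp)
  have hpos := (rootMultiplicity_pos hp).mpr hpa
  have hmul : (q * derivative p).rootMultiplicity a = p.rootMultiplicity a - 1 := by
    rw [rootMultiplicity_mul (mul_ne_zero hq (derivative_ne_zero_of_isRoot hp hpa)),
      rootMultiplicity_eq_zero hqa, derivative_rootMultiplicity_of_root hpa, zero_add]
  rw [wronskian, ← hmul, rootMultiplicity_sub_of_pow_dvd]
  · exact mul_ne_zero hq (derivative_ne_zero_of_isRoot hp hpa)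
  · rw [hmul, Nat.sub_add_cancel hpos]
    exact dvd_mul_of_dvd_right (pow_rootMultiplicity_dvd p a) _

theorem rootMultiplicity_wronskian_of_isRoot_mul {p q : R[X]} {a : R} (hpq : IsCoprime p q)
    (hp : p ≠ 0) (hq : q ≠ 0) (ha : (p * q).IsRoot a) :
    (wronskian q p).rootMultiplicity a = (p * q).rootMultiplicity a - 1 := by
  have not_both : ¬ (p.IsRoot a ∧ q.IsRoot a) := fun ⟨hpa, hqa⟩ => not_isUnit_X_sub_C a <|
    hpq.isUnit_of_dvd' (dvd_iff_isRoot.mpr hpa) (dvd_iff_isRoot.mpr hqa)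
  rw [rootMultiplicity_mul (mul_ne_zero hp hq)]
  rcases root_mul.mp ha with hpa | hqa
  · have hqa : ¬ q.IsRoot a := fun hqa => not_both ⟨hpa, hqa⟩
    rw [rootMultiplicity_wronskian_of_isRoot hp hpa hqa, rootMultiplicity_eq_zero hqa, add_zero]
  · have hpa : ¬ p.IsRoot a := fun hpa => not_both ⟨hpa, hqa⟩
    rw [← wronskian_neg_eq, rootMultiplicity_neg, rootMultiplicity_wronskian_of_isRoot hq hqa hpa,
      rootMultiplicity_eq_zero hpa, zero_add]

theorem natDegree_eq_zero_of_C_mul_X_pow_mul_wronskian_eq {F : Type*} [Field F] [IsAlgClosed F]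
    [CharZero F] {p q : F[X]} (hpq : IsCoprime p q) (hp : p ≠ 0) (hq : q ≠ 0) {c β : F}
    (hc : c ≠ 0) {k n : ℕ} (hkn : k ≠ n + 1)
    (h : C c * X ^ k * wronskian q p = C β * X ^ n * (p * q)) :
    p.natDegree = 0 ∧ q.natDegree = 0 := by
  rcases eq_or_ne β 0 with rfl | hβ
  · have hw : wronskian q p = 0 := by simpa [hc, X_ne_zero] using h
    obtain ⟨hq', hp'⟩ := hpq.symm.wronskian_eq_zero_iff.mp hw
    exact ⟨derivative_eq_zero.mp hp', derivative_eq_zero.mp hq'⟩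
  suffices (p * q).natDegree = 0 by rwa [natDegree_mul hp hq, Nat.add_eq_zero_iff] at this
  by_contra hdeg
  obtain ⟨a, ha⟩ := IsAlgClosed.exists_root (p * q) <| by
    rwa [degree_eq_natDegree (mul_ne_zero hp hq), Nat.cast_ne_zero]
  have hrhs : C β * X ^ n * (p * q) ≠ 0 := by simp [hβ, hp, hq, X_ne_zero]
  have hlhs : C c * X ^ k * wronskian q p ≠ 0 := h ▸ hrhs
  have hpos := (rootMultiplicity_pos (mul_ne_zero hp hq)).mpr ha
  -- orders at `a`: `[a = 0] k + (e - 1) = [a = 0] n + e`, where `e ≥ 1` is the order of `p * q`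
  have hmult := congrArg (rootMultiplicity a) h
  classical
  rw [rootMultiplicity_mul hlhs, rootMultiplicity_mul (left_ne_zero_of_mul hlhs),
    rootMultiplicity_mul hrhs, rootMultiplicity_mul (left_ne_zero_of_mul hrhs),
    rootMultiplicity_C, rootMultiplicity_C, rootMultiplicity_X_pow, rootMultiplicity_X_pow,
    rootMultiplicity_wronskian_of_isRoot_mul hpq hp hq ha] at hmult
  split_ifs at hmult <;> omega

end Polynomial

def Derivation.mkOfLeibniz {R A : Type*} [CommSemiring R] [CommRing A] [Algebra R A]
    (δ : A → A) (map_add : ∀ x y, δ (x + y) = δ x + δ y)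
    (leibniz : ∀ x y, δ (x * y) = δ x * y + x * δ y)
    (map_algebraMap : ∀ r, δ (algebraMap R A r) = 0) : Derivation R A A :=
  Derivation.mk'
    { toFun := δ
      map_add' := map_add
      map_smul' := fun r x => by
        simp [Algebra.smul_def, leibniz, map_algebraMap] }
    fun x y => by
      simp only [LinearMap.coe_mk, AddHom.coe_mk, smul_eq_mul, leibniz]
      ring

def Derivation.logDerivSubgroup {R K : Type*} [CommRing R] [Field K] [Algebra R K]
    (D : Derivation R K K) : AddSubgroup K where
  carrier := {y | ∃ b, b ≠ 0 ∧ y = D b / b}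
  add_mem' := by
    rintro _ _ ⟨a, ha, rfl⟩ ⟨b, hb, rfl⟩
    exact ⟨a * b, mul_ne_zero ha hb, by rw [D.leibniz, smul_eq_mul, smul_eq_mul]; field_simp; ring⟩
  zero_mem' := ⟨1, one_ne_zero, by simp⟩
  neg_mem' := by
    rintro _ ⟨a, ha, rfl⟩
    exact ⟨a⁻¹, inv_ne_zero ha, by rw [D.leibniz_inv, smul_eq_mul]; field_simp⟩

theorem AddSubgroup.exists_nsmul_mem_of_mem_span_rat {V : Type*} [AddCommGroup V] [Module ℚ V]
    (S : AddSubgroup V) {v : V} (hv : v ∈ Submodule.span ℚ (S : Set V)) :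
    ∃ N : ℕ, 0 < N ∧ N • v ∈ S := by
  induction hv using Submodule.span_induction with
  | mem x hx => exact ⟨1, one_pos, by simpa using hx⟩
  | zero => exact ⟨1, one_pos, by simp⟩
  | add x y _ _ hx hy =>
    obtain ⟨N₁, hN₁, hx⟩ := hx
    obtain ⟨N₂, hN₂, hy⟩ := hy
    refine ⟨N₁ * N₂, by positivity, ?_⟩
    have : (N₁ * N₂) • (x + y) = N₂ • N₁ • x + N₁ • N₂ • y := by
      rw [smul_add, smul_smul, smul_smul, mul_comm N₂]
    exact this ▸ add_mem (nsmul_mem hx _) (nsmul_mem hy _)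
  | smul r x _ hx =>
    obtain ⟨N, hN, hx⟩ := hx
    refine ⟨N * r.den, by positivity, ?_⟩
    have : (N * r.den) • r • x = r.num • N • x := by
      rw [← Nat.cast_smul_eq_nsmul ℚ, ← Nat.cast_smul_eq_nsmul ℚ N, ← Int.cast_smul_eq_zsmul ℚ,
        smul_smul, smul_smul, Nat.cast_mul, mul_assoc, Rat.den_mul_eq_num, mul_comm]
    exact this ▸ zsmul_mem hx _

namespace Derivation

variable {F : Type*} [Field F] (D : Derivation F (RatFunc F) (RatFunc F))

theorem map_algebraMap_polynomial (p : F[X]) :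
    D (algebraMap F[X] (RatFunc F) p) =
      algebraMap F[X] (RatFunc F) (derivative p) * D RatFunc.X := by
  have h : ∀ p : F[X], algebraMap F[X] (RatFunc F) p = aeval RatFunc.X p := fun p => by
    rw [← RatFunc.algebraMap_X, aeval_algebraMap_apply, aeval_X_left_apply]
  rw [h, h, D.map_aeval, smul_eq_mul]

theorem map_div_algebraMap_polynomial (p q : F[X]) :
    D (algebraMap F[X] (RatFunc F) p / algebraMap F[X] (RatFunc F) q) =
      algebraMap F[X] (RatFunc F) (wronskian q p) / algebraMap F[X] (RatFunc F) q ^ 2 *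
        D RatFunc.X := by
  rw [D.leibniz_div, D.map_algebraMap_polynomial, D.map_algebraMap_polynomial, wronskian,
    map_sub, map_mul, map_mul, smul_eq_mul, smul_eq_mul, smul_eq_mul]
  ring

theorem C_mul_X_pow_mul_wronskian_eq {c β : F} {k n : ℕ}
    (hX : D RatFunc.X = algebraMap F (RatFunc F) c * RatFunc.X ^ k / RatFunc.X ^ n)
    {a : RatFunc F} (ha : D a = algebraMap F (RatFunc F) β * a) :
    C c * X ^ k * wronskian a.denom a.num = C β * X ^ n * (a.num * a.denom) := by
  apply RatFunc.algebraMap_injective F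
  have hq : algebraMap F[X] (RatFunc F) a.denom ≠ 0 := by simp [a.denom_ne_zero]
  have hX0 : (RatFunc.X : RatFunc F) ≠ 0 := RatFunc.X_ne_zero
  have hDa := D.map_div_algebraMap_polynomial a.num a.denom
  rw [a.num_div_denom, hX] at hDa
  field_simp at hDa
  have haq := (div_eq_iff hq).mp a.num_div_denom
  simp only [map_mul, map_pow, RatFunc.algebraMap_C, RatFunc.algebraMap_X,
    ← RatFunc.algebraMap_eq_C]
  linear_combination -hDa + algebraMap F[X] (RatFunc F) a.denom ^ 2 * RatFunc.X ^ n * ha -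
    algebraMap F (RatFunc F) β * RatFunc.X ^ n * algebraMap F[X] (RatFunc F) a.denom * haq

theorem mem_range_algebraMap_of_logDeriv_mem [IsAlgClosed F] [CharZero F] {c : F} (hc : c ≠ 0)
    {m : ℤ} (hm : m ≠ 1) (hX : D RatFunc.X = algebraMap F (RatFunc F) c * RatFunc.X ^ m)
    {a : RatFunc F} (ha : a ≠ 0) (h : D a / a ∈ Set.range (algebraMap F (RatFunc F))) :
    a ∈ Set.range (algebraMap F (RatFunc F)) := by
  obtain ⟨β, hβ⟩ := h
  obtain ⟨k, n, rfl⟩ : ∃ k n : ℕ, m = k - n := ⟨m.toNat, (-m).toNat, by omega⟩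
  have hpoly := D.C_mul_X_pow_mul_wronskian_eq
    (by rw [hX, zpow_sub₀ RatFunc.X_ne_zero, zpow_natCast, zpow_natCast, mul_div_assoc])
    (by rw [hβ, div_mul_cancel₀ _ ha])
  obtain ⟨hp, hq⟩ := natDegree_eq_zero_of_C_mul_X_pow_mul_wronskian_eq a.isCoprime_num_denom
    (RatFunc.num_ne_zero ha) a.denom_ne_zero hc (by omega) hpoly
  have hden : a.denom = 1 := (Monic.natDegree_eq_zero a.monic_denom).mp hq
  refine ⟨a.num.coeff 0, Eq.trans ?_ a.num_div_denom⟩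
  rw [hden, map_one, div_one, eq_C_of_natDegree_eq_zero hp]
  simp [RatFunc.algebraMap_C, RatFunc.algebraMap_eq_C]

end Derivation

/-- Let `F̄` be algebraically closed of characteristic zero, `K = F̄(t)` with the
derivation `δ_{c,m}` vanishing on `F̄` and `δ_{c,m}(t) = c·t^m`, where `c ≠ 0` and `m ≠ 1` is an
integer. Then for every `a ∈ F̄(t) \ F̄`, the logarithmic derivative `δ_{c,m}(a)/a` does not lie
in `F̄`; consequently no nonzero element of `F̄` lies in the `ℚ`-span of the logarithmic
derivatives of `(F̄(t), δ_{c,m})`. -/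
theorem stmt18 {F : Type*} [Field F] [IsAlgClosed F] [CharZero F]
    (c : F) (hc : c ≠ 0) (m : ℤ) (hm : m ≠ 1)
    (δ : RatFunc F → RatFunc F)
    (hadd : ∀ x y : RatFunc F, δ (x + y) = δ x + δ y)
    (hmul : ∀ x y : RatFunc F, δ (x * y) = δ x * y + x * δ y)
    (hF : ∀ a : F, δ (algebraMap F (RatFunc F) a) = 0)
    (ht : δ RatFunc.X = algebraMap F (RatFunc F) c * RatFunc.X ^ m) :
    (∀ a : RatFunc F, a ∉ Set.range (algebraMap F (RatFunc F)) →
        δ a / a ∉ Set.range (algebraMap F (RatFunc F))) ∧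
      (∀ x : F, x ≠ 0 →
        algebraMap F (RatFunc F) x ∉
          Submodule.span ℚ {y : RatFunc F | ∃ b : RatFunc F, b ≠ 0 ∧ y = δ b / b}) := by
  set D := Derivation.mkOfLeibniz δ hadd hmul hF
  have mem_range_of_logDeriv : ∀ {a}, a ≠ 0 → D a / a ∈ Set.range (algebraMap F (RatFunc F)) →
      a ∈ Set.range (algebraMap F (RatFunc F)) :=
    D.mem_range_algebraMap_of_logDeriv_mem hc hm ht
  refine ⟨fun a ha h => ha (mem_range_of_logDeriv (by rintro rfl; exact ha ⟨0, map_zero _⟩) h),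
    fun x hx hspan => ?_⟩
  obtain ⟨N, hN, b, hb, hNb⟩ := D.logDerivSubgroup.exists_nsmul_mem_of_mem_span_rat hspan
  obtain ⟨y, rfl⟩ := mem_range_of_logDeriv hb ⟨N • x, by rw [map_nsmul, hNb]⟩
  rw [D.map_algebraMap, zero_div, ← map_nsmul, map_eq_zero_iff _ (algebraMap F _).injective] at hNb
  exact hx (by simpa [hN.ne'] using hNb)
end
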